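/- arXiv:2506.20417 — 4 statements merged into one kernel-verified Lean document; each statement's English description precedes it below -/
import Mathlib

section
/- Bias of the OPFV estimator (Theorem 3.3): Assume Common Support, Common Time Feature Support, and the stationary-context assumption. Then for any target time t' > T, Bias(V̂^{OPFV}_{t'}(π_e;𝒟)) = E_{p(x,t) π_e(a|x,t')}[ (𝕀_φ(t,t')/p(φ(t'))) · ( Δ_q(x,t,t',a) − Δ_{f̂}(x,t,t',a) ) ], where the expectation is over (x,t) ~ p(x,t) and a ~ π_e(·|x,t'). -/
/-!
Because the sample is i.i.d., the estimator has the mean `∫ est ∂P` of a single term. Given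
`(x, t)`, importance weighting turns the mean of the correction term into
`𝕀_φ(t,t')/p(φ(t')) · ∑ₐ π_e(a|x,t') (q − f̂)(x,t,a)`, actions with `π₀(a|x,t) = 0` being
irrelevant by common support. After subtracting the claimed integrand and `V_{t'}(x)`, what is
left is `w(x) (𝕀_φ(t,t')/p(φ(t')) − 1)` with `w(x) = ∑ₐ π_e(a|x,t') (q − f̂)(x,t',a)`, and its
`t`-integral vanishes because `p(φ(t'))` is the `p(t)`-mass of `{φ = φ(t')}`.

Nothing is assumed measurable in `(x, t)`, so the integrability of the reward sections of `est`
has to be extracted from the identity describing the law of one sample. Applied to the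
truncations `min |g| N` shifted by constants, it shows that their `t`-sections are a.e.
measurable; monotone convergence, used once per layer of integration, then bounds them
uniformly in `N`.
-/

open MeasureTheory Set Filter
open scoped ENNReal

theorem min_abs_natCast_mem_Icc (y : ℝ) (N : ℕ) : min |y| (N : ℝ) ∈ Icc 0 (N : ℝ) :=
  ⟨le_min (abs_nonneg y) N.cast_nonneg, min_le_right _ _⟩

theorem ENNReal.iSup_ofReal_min_natCast (x : ℝ) :
    ⨆ N : ℕ, ENNReal.ofReal (min x N) = ENNReal.ofReal x :=
  le_antisymm (iSup_le fun _ => ENNReal.ofReal_le_ofReal (min_le_left _ _))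
    (by simpa [min_eq_left (Nat.le_ceil x)] using
      le_iSup (fun N : ℕ => ENNReal.ofReal (min x N)) ⌈x⌉₊)

namespace MeasureTheory

section MonotoneConvergence

variable {α : Type*} [MeasurableSpace α] {μ : Measure α}

theorem lintegral_iSup_ofReal_lt_top {G : ℕ → α → ℝ} (hG : ∀ N, Integrable (G N) μ)
    (hG₀ : ∀ N, 0 ≤ᵐ[μ] G N) (hmono : ∀ᵐ a ∂μ, Monotone fun N => G N a)
    (hbdd : BddAbove (range fun N => ∫ a, G N a ∂μ)) :
    ∫⁻ a, ⨆ N, ENNReal.ofReal (G N a) ∂μ < ∞ := by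
  obtain ⟨B, hB⟩ := hbdd
  rw [lintegral_iSup' (fun N => (hG N).aemeasurable.ennreal_ofReal)
    (by filter_upwards [hmono] with a ha N M hNM using ENNReal.ofReal_le_ofReal (ha hNM))]
  refine (iSup_le fun N => ?_).trans_lt (ENNReal.ofReal_lt_top (r := B))
  rw [← ofReal_integral_eq_lintegral_ofReal (hG N) (hG₀ N)]
  exact ENNReal.ofReal_le_ofReal (hB ⟨N, rfl⟩)

theorem ae_bddAbove_of_monotone {G : ℕ → α → ℝ} (hG : ∀ N, Integrable (G N) μ)
    (hG₀ : ∀ N, 0 ≤ᵐ[μ] G N) (hmono : ∀ᵐ a ∂μ, Monotone fun N => G N a)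
    (hbdd : BddAbove (range fun N => ∫ a, G N a ∂μ)) :
    ∀ᵐ a ∂μ, BddAbove (range fun N => G N a) := by
  filter_upwards [ae_lt_top' (AEMeasurable.iSup fun N => (hG N).aemeasurable.ennreal_ofReal)
    (lintegral_iSup_ofReal_lt_top hG hG₀ hmono hbdd).ne] with a ha
  refine ⟨(⨆ N, ENNReal.ofReal (G N a)).toReal, ?_⟩
  rintro _ ⟨N, rfl⟩
  calc G N a ≤ (ENNReal.ofReal (G N a)).toReal := by simp [ENNReal.toReal_ofReal']
    _ ≤ _ := ENNReal.toReal_mono ha.ne (le_iSup (fun N => ENNReal.ofReal (G N a)) N)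

theorem Integrable.of_bddAbove_integral_min_abs [IsFiniteMeasure μ] {f : α → ℝ}
    (hf : AEStronglyMeasurable f μ) (hbdd : BddAbove (range fun N : ℕ => ∫ a, min |f a| N ∂μ)) :
    Integrable f μ := by
  refine ⟨hf, ?_⟩
  rw [hasFiniteIntegral_iff_norm, lintegral_congr fun a => by
    rw [Real.norm_eq_abs, ← ENNReal.iSup_ofReal_min_natCast]]
  refine lintegral_iSup_ofReal_lt_top (fun N => ?_)
    (fun N => ae_of_all _ fun a => le_min (abs_nonneg _) N.cast_nonneg)
    (ae_of_all _ fun a N M hNM => min_le_min_left _ (Nat.cast_le.2 hNM)) hbdd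
  refine .of_bound (hf.norm.inf aestronglyMeasurable_const) N (ae_of_all _ fun a => ?_)
  rw [Real.norm_of_nonneg (le_min (abs_nonneg _) N.cast_nonneg)]
  exact min_le_right _ _

end MonotoneConvergence

theorem ae_aestronglyMeasurable_of_integral_integral_add_const {α β : Type*} [MeasurableSpace α]
    [MeasurableSpace β] {μ : Measure α} {ν : Measure β} [IsProbabilityMeasure μ]
    [IsProbabilityMeasure ν] {F : α → β → ℝ} {M c : ℝ}
    (hF : ∀ x y, ‖F x y‖ ≤ M) (h : ∀ s : ℝ, ∫ x, ∫ y, (F x y + s) ∂ν ∂μ = c + s) :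
    (∀ᵐ x ∂μ, AEStronglyMeasurable (F x) ν) ∧ Integrable (fun x => ∫ y, F x y ∂ν) μ ∧
      ∫ x, ∫ y, F x y ∂ν ∂μ = c := by
  classical
  set v : α → ℝ := fun x => ∫ y, F x y ∂ν
  -- a shift by `s` is seen by the inner integral exactly when `m x = 1`; otherwise it is junk `0`
  set m : α → ℝ := fun x => if AEStronglyMeasurable (F x) ν then 1 else 0 with hm
  have hsplit : ∀ s x, ∫ y, (F x y + s) ∂ν = v x + s * m x := by
    intro s x
    by_cases hx : AEStronglyMeasurable (F x) ν
    · rw [integral_add (.of_bound hx M (ae_of_all _ (hF x))) (integrable_const s)]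
      simp [v, hm, hx]
    · have hns : ¬ Integrable (fun y => F x y + s) ν := fun hi =>
        hx (by simpa using hi.aestronglyMeasurable.add_const (-s))
      simp only [v, hm]
      rw [integral_undef hns, integral_undef fun hi => hx hi.1]
      simp [hx]
  have hshift : ∀ s, c + s ≠ 0 →
      Integrable (fun x => v x + s * m x) μ ∧ ∫ x, (v x + s * m x) ∂μ = c + s := by
    intro s hs
    have hs' := h s
    simp_rw [hsplit] at hs'
    exact ⟨by_contra fun hni => hs (by rw [← hs', integral_undef hni]), hs'⟩
  obtain ⟨h₁, h₁'⟩ := hshift (1 - c) (by ring_nf; norm_num)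
  obtain ⟨h₂, h₂'⟩ := hshift (2 - c) (by ring_nf; norm_num)
  have hm_eq : m = fun x => (v x + (2 - c) * m x) - (v x + (1 - c) * m x) := by
    funext x; ring
  have hm_int : Integrable m μ := hm_eq ▸ h₂.sub h₁
  have hm_one : ∫ x, m x ∂μ = 1 := by
    rw [hm_eq, integral_sub h₂ h₁, h₂', h₁']; ring
  have hv_int : Integrable v μ :=
    (h₁.sub (hm_int.const_mul (1 - c))).congr (ae_of_all _ fun x => by simp)
  refine ⟨?_, hv_int, ?_⟩
  · have hnonneg : 0 ≤ fun x => 1 - m x := fun x => by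
      by_cases hx : AEStronglyMeasurable (F x) ν <;> simp [hm, hx]
    have hzero := (integral_eq_zero_iff_of_nonneg hnonneg ((integrable_const 1).sub hm_int)).1
      (by rw [integral_sub (integrable_const 1) hm_int, hm_one]; simp)
    filter_upwards [hzero] with x hx
    by_contra hx'
    simp [hm, hx'] at hx
  · rw [integral_add hv_int (hm_int.const_mul _), integral_const_mul, hm_one] at h₁'
    linarith

theorem integral_mul_ite_div_sub_one {α : Type*} [MeasurableSpace α] {μ : Measure α}
    [IsProbabilityMeasure μ] (p : α → Prop) [DecidablePred p] (hp : μ.real {t | p t} ≠ 0)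
    (c : ℝ) :
    ∫ t, c * ((if p t then (1 : ℝ) else 0) / μ.real {t | p t} - 1) ∂μ = 0 := by
  have hind : (fun t => if p t then (1 : ℝ) else 0) = {t | p t}.indicator fun _ => 1 := by
    funext t; simp [Set.indicator_apply]
  by_cases hS : NullMeasurableSet {t | p t} μ
  · have hint : Integrable (fun t => if p t then (1 : ℝ) else 0) μ := by
      rw [hind]; exact (integrable_const 1).indicator₀ hS
    rw [integral_const_mul, integral_sub (hint.div_const _) (integrable_const 1), integral_div,
      hind, integral_indicator₀ hS, setIntegral_const]
    simp [hp]
  -- otherwise the integrand is not a.e.-measurable unless `c = 0`, and the integral is junk `0`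
  rcases eq_or_ne c 0 with rfl | hc
  · simp
  refine integral_undef fun hi => hS ?_
  rw [← aemeasurable_indicator_const_iff (1 : ℝ), ← hind]
  refine ((hi.aemeasurable.const_mul c⁻¹).add_const 1 |>.mul_const (μ.real {t | p t})).congr
    (ae_of_all _ fun t => ?_)
  field_simp
  ring

theorem Measure.map_eq_prod_of_integral_indicator {Z α β : Type*} [MeasurableSpace Z]
    [MeasurableSpace α] [MeasurableSpace β] {P : Measure Z} [IsFiniteMeasure P] {μ : Measure α}
    {ν : Measure β} [IsFiniteMeasure μ] [IsFiniteMeasure ν] {f : Z → α × β} (hf : Measurable f)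
    (h : ∀ S, MeasurableSet S →
      ∫ z, S.indicator (1 : α × β → ℝ) (f z) ∂P
        = ∫ x, ∫ y, S.indicator (1 : α × β → ℝ) (x, y) ∂ν ∂μ) :
    P.map f = μ.prod ν := by
  ext S hS
  rw [← measureReal_eq_measureReal_iff, ← integral_indicator_one hS, ← integral_indicator_one hS,
    integral_map hf.aemeasurable (measurable_one.indicator hS).aestronglyMeasurable,
    integral_prod _ ((integrable_const 1).indicator hS), h S hS]

theorem integral_mean_pi {Z : Type*} [MeasurableSpace Z] {P : Measure Z} [IsProbabilityMeasure P]
    {n : ℕ} (hn : n ≠ 0) {f : Z → ℝ} (hf : Integrable f P) :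
    ∫ D : Fin n → Z, (n : ℝ)⁻¹ * ∑ i, f (D i) ∂Measure.pi (fun _ => P) = ∫ z, f z ∂P := by
  rw [integral_const_mul, integral_finsetSum _ fun i _ => integrable_comp_eval hf]
  simp only [fun i => integral_comp_eval (μ := fun _ : Fin n => P) (i := i) hf.aestronglyMeasurable,
    Finset.sum_const, Finset.card_univ, Fintype.card_fin, nsmul_eq_mul]
  field_simp

theorem integral_const_mul_sub_of_integrable {κ : Measure ℝ} [IsProbabilityMeasure κ]
    {c f q : ℝ} (hint : Integrable (fun r => c * (r - f)) κ) (hq : ∫ r, r ∂κ = q) :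
    ∫ r, c * (r - f) ∂κ = c * (q - f) := by
  rcases eq_or_ne c 0 with rfl | hc
  · simp
  have hid : Integrable (fun r => r) κ :=
    ((hint.const_mul c⁻¹).add (integrable_const f)).congr
      (ae_of_all _ fun r => by simp [hc])
  rw [integral_const_mul, integral_sub hid (integrable_const f), hq]
  simp

end MeasureTheory

section LoggedData

variable {𝒳 𝒜 : Type*} [Fintype 𝒜]

noncomputable def condMean (π0 : 𝒳 → ℝ → 𝒜 → ℝ) (κ : 𝒳 → ℝ → 𝒜 → Measure ℝ)
    (g : 𝒳 × ℝ × 𝒜 × ℝ → ℝ) (x : 𝒳) (t : ℝ) : ℝ :=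
  ∑ a, π0 x t a * ∫ r, g (x, t, a, r) ∂κ x t a

structure IsLoggingModel (π0 : 𝒳 → ℝ → 𝒜 → ℝ) (κ : 𝒳 → ℝ → 𝒜 → Measure ℝ) : Prop where
  nonneg : ∀ x t a, 0 ≤ π0 x t a
  sum_eq_one : ∀ x t, ∑ a, π0 x t a = 1
  isProbabilityMeasure : ∀ x t a, IsProbabilityMeasure (κ x t a)

def IsLoggedLaw [MeasurableSpace 𝒳] [MeasurableSpace 𝒜] (P : Measure (𝒳 × ℝ × 𝒜 × ℝ))
    (μx : Measure 𝒳) (μt : Measure ℝ) (π0 : 𝒳 → ℝ → 𝒜 → ℝ) (κ : 𝒳 → ℝ → 𝒜 → Measure ℝ) : Prop :=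
  ∀ g, Integrable g P → ∫ z, g z ∂P = ∫ x, ∫ t, condMean π0 κ g x t ∂μt ∂μx

variable {π0 : 𝒳 → ℝ → 𝒜 → ℝ} {κ : 𝒳 → ℝ → 𝒜 → Measure ℝ}

namespace IsLoggingModel

theorem condMean_add_const (hm : IsLoggingModel π0 κ) {g g' : 𝒳 × ℝ × 𝒜 × ℝ → ℝ} {x : 𝒳}
    {t c : ℝ} (hg : ∀ a, π0 x t a ≠ 0 → Integrable (fun r => g (x, t, a, r)) (κ x t a))
    (hg' : ∀ a r, g' (x, t, a, r) = g (x, t, a, r) + c) :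
    condMean π0 κ g' x t = condMean π0 κ g x t + c := by
  have hterm : ∀ a, π0 x t a * ∫ r, g' (x, t, a, r) ∂κ x t a
      = π0 x t a * ∫ r, g (x, t, a, r) ∂κ x t a + π0 x t a * c := by
    intro a
    have := hm.isProbabilityMeasure x t a
    by_cases ha : π0 x t a = 0
    · simp [ha]
    · simp_rw [hg', integral_add (hg a ha) (integrable_const c)]
      simp [mul_add]
  simp only [condMean, hterm, Finset.sum_add_distrib, ← Finset.sum_mul, hm.sum_eq_one, one_mul]

theorem condMean_const (hm : IsLoggingModel π0 κ) {g : 𝒳 × ℝ × 𝒜 × ℝ → ℝ} {x : 𝒳} {t c : ℝ}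
    (hg : ∀ a r, g (x, t, a, r) = c) : condMean π0 κ g x t = c := by
  simpa [condMean] using
    hm.condMean_add_const (g := fun _ => 0) (fun _ _ => integrable_zero _ _ _) (by simpa using hg)

theorem condMean_mono (hm : IsLoggingModel π0 κ) {g g' : 𝒳 × ℝ × 𝒜 × ℝ → ℝ} {x : 𝒳} {t : ℝ}
    (hg : ∀ a, Integrable (fun r => g (x, t, a, r)) (κ x t a))
    (hg' : ∀ a, Integrable (fun r => g' (x, t, a, r)) (κ x t a))
    (hle : ∀ a r, g (x, t, a, r) ≤ g' (x, t, a, r)) :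
    condMean π0 κ g x t ≤ condMean π0 κ g' x t :=
  Finset.sum_le_sum fun a _ =>
    mul_le_mul_of_nonneg_left (integral_mono (hg a) (hg' a) (hle a)) (hm.nonneg x t a)

theorem integrable_min_abs_section (hm : IsLoggingModel π0 κ) {g : 𝒳 × ℝ × 𝒜 × ℝ → ℝ} {x : 𝒳}
    {t : ℝ} {a : 𝒜} (hgm : Measurable fun r => g (x, t, a, r)) (N : ℕ) :
    Integrable (fun r => min |g (x, t, a, r)| N) (κ x t a) :=
  have := hm.isProbabilityMeasure x t a
  .of_bound (hgm.abs.min measurable_const).aestronglyMeasurable N (ae_of_all _ fun r => by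
    rw [Real.norm_of_nonneg (min_abs_natCast_mem_Icc _ N).1]
    exact (min_abs_natCast_mem_Icc _ N).2)

theorem condMean_min_abs_mem_Icc (hm : IsLoggingModel π0 κ) {g : 𝒳 × ℝ × 𝒜 × ℝ → ℝ}
    (hgm : ∀ x t a, Measurable fun r => g (x, t, a, r)) (N : ℕ) (x : 𝒳) (t : ℝ) :
    condMean π0 κ (fun z => min |g z| N) x t ∈ Icc 0 (N : ℝ) := by
  have hint := fun a => hm.integrable_min_abs_section (hgm x t a) N
  have hconst := fun a (c : ℝ) =>
    have := hm.isProbabilityMeasure x t a; integrable_const (μ := κ x t a) c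
  constructor
  · calc (0 : ℝ) = condMean π0 κ (fun _ => 0) x t := (hm.condMean_const fun _ _ => rfl).symm
      _ ≤ _ := hm.condMean_mono (fun a => hconst a 0) hint
        fun _ _ => (min_abs_natCast_mem_Icc _ N).1
  · calc condMean π0 κ (fun z => min |g z| N) x t
        ≤ condMean π0 κ (fun _ => (N : ℝ)) x t :=
          hm.condMean_mono hint (fun a => hconst a N) fun _ _ => (min_abs_natCast_mem_Icc _ N).2
      _ = N := hm.condMean_const fun _ _ => rfl

theorem monotone_condMean_min_abs (hm : IsLoggingModel π0 κ) {g : 𝒳 × ℝ × 𝒜 × ℝ → ℝ}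
    (hgm : ∀ x t a, Measurable fun r => g (x, t, a, r)) (x : 𝒳) (t : ℝ) :
    Monotone fun N : ℕ => condMean π0 κ (fun z => min |g z| N) x t := fun N M hNM =>
  hm.condMean_mono (fun a => hm.integrable_min_abs_section (hgm x t a) N)
    (fun a => hm.integrable_min_abs_section (hgm x t a) M)
    fun _ _ => min_le_min_left _ (Nat.cast_le.2 hNM)

theorem condMean_importance_weight (hm : IsLoggingModel π0 κ) {x : 𝒳} {t w : ℝ}
    {πe q f : 𝒜 → ℝ} (hq : ∀ a, ∫ r, r ∂κ x t a = q a) (hπe : ∀ a, 0 ≤ πe a)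
    (hcommon : ∀ a, 0 < πe a → 0 < π0 x t a) {g : 𝒳 × ℝ × 𝒜 × ℝ → ℝ}
    (hg : ∀ a r, g (x, t, a, r) = w * (πe a / π0 x t a) * (r - f a))
    (hint : ∀ a, π0 x t a ≠ 0 → Integrable (fun r => g (x, t, a, r)) (κ x t a)) :
    condMean π0 κ g x t = w * ∑ a, πe a * (q a - f a) := by
  rw [condMean, Finset.mul_sum]
  refine Finset.sum_congr rfl fun a _ => ?_
  have := hm.isProbabilityMeasure x t a
  by_cases ha : π0 x t a = 0
  · have hπe0 : πe a = 0 := ((hπe a).eq_of_not_lt fun h => (hcommon a h).ne' ha).symm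
    simp [ha, hπe0]
  · simp_rw [hg] at hint ⊢
    rw [integral_const_mul_sub_of_integrable (hint a ha) (hq a)]
    field_simp

theorem condMean_opfv_residual (hm : IsLoggingModel π0 κ) {x : 𝒳} {t w : ℝ}
    {πe q f q' f' : 𝒜 → ℝ} (hq : ∀ a, ∫ r, r ∂κ x t a = q a) (hπe : ∀ a, 0 ≤ πe a)
    (hcommon : ∀ a, 0 < πe a → 0 < π0 x t a) {ψ : 𝒳 × ℝ × 𝒜 × ℝ → ℝ}
    (hψ : ∀ a r, ψ (x, t, a, r) = w * (πe a / π0 x t a) * (r - f a) + ∑ a', πe a' * f' a'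
      - (∑ a', πe a' * (w * ((q a' - q' a') - (f a' - f' a'))) + ∑ a', πe a' * q' a'))
    (hint : ∀ a, π0 x t a ≠ 0 → Integrable (fun r => ψ (x, t, a, r)) (κ x t a)) :
    condMean π0 κ ψ x t = (∑ a, πe a * (q' a - f' a)) * (w - 1) := by
  set c := ∑ a', πe a' * f' a'
      - (∑ a', πe a' * (w * ((q a' - q' a') - (f a' - f' a'))) + ∑ a', πe a' * q' a') with hc
  set g : 𝒳 × ℝ × 𝒜 × ℝ → ℝ := fun z => ψ z - c
  have hgψ : ∀ a r, g (x, t, a, r) = w * (πe a / π0 x t a) * (r - f a) := fun a r => by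
    simp only [g, hψ]; ring
  have hgint : ∀ a, π0 x t a ≠ 0 → Integrable (fun r => g (x, t, a, r)) (κ x t a) := fun a ha =>
    have := hm.isProbabilityMeasure x t a
    (hint a ha).sub (integrable_const c)
  rw [hm.condMean_add_const (c := c) hgint fun a r => (sub_add_cancel _ _).symm,
    hm.condMean_importance_weight hq hπe hcommon hgψ hgint, hc]
  simp only [Finset.mul_sum, Finset.sum_mul, ← Finset.sum_add_distrib, ← Finset.sum_sub_distrib]
  exact Finset.sum_congr rfl fun a _ => by ring

end IsLoggingModel

namespace IsLoggedLaw

variable [MeasurableSpace 𝒳] [MeasurableSpace 𝒜] {P : Measure (𝒳 × ℝ × 𝒜 × ℝ)}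
  {μx : Measure 𝒳} {μt : Measure ℝ}

theorem map_eq_prod [IsFiniteMeasure P] [IsFiniteMeasure μx] [IsFiniteMeasure μt]
    (hP : IsLoggedLaw P μx μt π0 κ) (hm : IsLoggingModel π0 κ) :
    P.map (fun z => (z.1, z.2.1)) = μx.prod μt := by
  refine Measure.map_eq_prod_of_integral_indicator (by fun_prop) fun S hS => ?_
  rw [hP (fun z => S.indicator 1 (z.1, z.2.1))
    (((integrable_const 1).indicator hS).comp_measurable (by fun_prop))]
  exact integral_congr_ae (ae_of_all _ fun x => integral_congr_ae (ae_of_all _ fun t =>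
    hm.condMean_const fun _ _ => rfl))

theorem integral_comp_fst_snd [IsFiniteMeasure P] [IsFiniteMeasure μx] [IsFiniteMeasure μt]
    (hP : IsLoggedLaw P μx μt π0 κ) (hm : IsLoggingModel π0 κ) {h : 𝒳 × ℝ → ℝ}
    (hh : Integrable h (μx.prod μt)) :
    Integrable (fun z => h (z.1, z.2.1)) P ∧
      ∫ z, h (z.1, z.2.1) ∂P = ∫ x, ∫ t, h (x, t) ∂μt ∂μx := by
  have hmeas : Measurable fun z : 𝒳 × ℝ × 𝒜 × ℝ => (z.1, z.2.1) := by fun_prop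
  have hh' : Integrable h (P.map fun z => (z.1, z.2.1)) := hP.map_eq_prod hm ▸ hh
  refine ⟨hh'.comp_measurable hmeas, ?_⟩
  rw [← integral_map hmeas.aemeasurable hh'.aestronglyMeasurable, hP.map_eq_prod hm,
    integral_prod h hh]

variable [IsProbabilityMeasure P] [IsProbabilityMeasure μx] [IsProbabilityMeasure μt]

theorem ae_aestronglyMeasurable_condMean_min_abs (hP : IsLoggedLaw P μx μt π0 κ)
    (hm : IsLoggingModel π0 κ) {g : 𝒳 × ℝ × 𝒜 × ℝ → ℝ} (hg : Integrable g P)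
    (hgm : ∀ x t a, Measurable fun r => g (x, t, a, r)) (N : ℕ) :
    (∀ᵐ x ∂μx, AEStronglyMeasurable (condMean π0 κ (fun z => min |g z| N) x) μt) ∧
      Integrable (fun x => ∫ t, condMean π0 κ (fun z => min |g z| N) x t ∂μt) μx ∧
      ∫ x, ∫ t, condMean π0 κ (fun z => min |g z| N) x t ∂μt ∂μx = ∫ z, min |g z| N ∂P := by
  have hgN : Integrable (fun z => min |g z| (N : ℝ)) P :=
    .of_bound (hg.1.norm.inf aestronglyMeasurable_const) N (ae_of_all _ fun z => by
      rw [Real.norm_of_nonneg (min_abs_natCast_mem_Icc _ N).1]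
      exact (min_abs_natCast_mem_Icc _ N).2)
  refine ae_aestronglyMeasurable_of_integral_integral_add_const (M := N) (fun x t => ?_)
    fun s => ?_
  · rw [Real.norm_of_nonneg (hm.condMean_min_abs_mem_Icc hgm N x t).1]
    exact (hm.condMean_min_abs_mem_Icc hgm N x t).2
  · have := hP (fun z => min |g z| N + s) (hgN.add (integrable_const s))
    rw [integral_add hgN (integrable_const s)] at this
    simp only [integral_const, probReal_univ, smul_eq_mul, one_mul] at this
    rw [this]
    exact integral_congr_ae (ae_of_all _ fun x => integral_congr_ae (ae_of_all _ fun t =>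
      (hm.condMean_add_const (fun a _ => hm.integrable_min_abs_section (hgm x t a) N)
        fun _ _ => rfl).symm))

theorem ae_ae_bddAbove_condMean_min_abs (hP : IsLoggedLaw P μx μt π0 κ)
    (hm : IsLoggingModel π0 κ) {g : 𝒳 × ℝ × 𝒜 × ℝ → ℝ} (hg : Integrable g P)
    (hgm : ∀ x t a, Measurable fun r => g (x, t, a, r)) :
    ∀ᵐ x ∂μx, ∀ᵐ t ∂μt,
      BddAbove (range fun N : ℕ => condMean π0 κ (fun z => min |g z| N) x t) := by
  have htr := hP.ae_aestronglyMeasurable_condMean_min_abs hm hg hgm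
  have hnonneg := fun N x t => (hm.condMean_min_abs_mem_Icc hgm N x t).1
  have hsec : ∀ᵐ x ∂μx, ∀ N : ℕ,
      Integrable (condMean π0 κ (fun z => min |g z| N) x) μt := by
    filter_upwards [ae_all_iff.2 fun N => (htr N).1] with x hx N
    refine .of_bound (hx N) N (ae_of_all _ fun t => ?_)
    rw [Real.norm_of_nonneg (hnonneg N x t)]
    exact (hm.condMean_min_abs_mem_Icc hgm N x t).2
  have hbdd : ∀ᵐ x ∂μx,
      BddAbove (range fun N : ℕ => ∫ t, condMean π0 κ (fun z => min |g z| N) x t ∂μt) := by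
    refine ae_bddAbove_of_monotone (fun N => (htr N).2.1)
      (fun N => ae_of_all _ fun x => integral_nonneg (hnonneg N x)) ?_ ⟨∫ z, |g z| ∂P, ?_⟩
    · filter_upwards [hsec] with x hx N M hNM
      exact integral_mono (hx N) (hx M) fun t => hm.monotone_condMean_min_abs hgm x t hNM
    · rintro _ ⟨N, rfl⟩
      simp only [(htr N).2.2]
      exact integral_mono_of_nonneg (ae_of_all _ fun z => (min_abs_natCast_mem_Icc _ N).1)
        hg.abs (ae_of_all _ fun z => min_le_left _ _)
  filter_upwards [hsec, hbdd] with x hx hxbdd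
  exact ae_bddAbove_of_monotone hx (fun N => ae_of_all _ (hnonneg N x))
    (ae_of_all _ fun t => hm.monotone_condMean_min_abs hgm x t) hxbdd

theorem ae_ae_integrable_section (hP : IsLoggedLaw P μx μt π0 κ) (hm : IsLoggingModel π0 κ)
    {g : 𝒳 × ℝ × 𝒜 × ℝ → ℝ} (hg : Integrable g P)
    (hgm : ∀ x t a, Measurable fun r => g (x, t, a, r)) :
    ∀ᵐ x ∂μx, ∀ᵐ t ∂μt, ∀ a, π0 x t a ≠ 0 →
      Integrable (fun r => g (x, t, a, r)) (κ x t a) := by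
  filter_upwards [hP.ae_ae_bddAbove_condMean_min_abs hm hg hgm] with x hx
  filter_upwards [hx] with t ⟨B, hB⟩ a ha
  have := hm.isProbabilityMeasure x t a
  have hpos : 0 < π0 x t a := (hm.nonneg x t a).lt_of_ne' ha
  refine Integrable.of_bddAbove_integral_min_abs (hgm x t a).aestronglyMeasurable
    ⟨B / π0 x t a, ?_⟩
  rintro _ ⟨N, rfl⟩
  rw [le_div_iff₀' hpos]
  refine le_trans ?_ (hB ⟨N, rfl⟩)
  exact Finset.single_le_sum (f := fun a => π0 x t a * ∫ r, min |g (x, t, a, r)| N ∂κ x t a)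
    (fun a _ => mul_nonneg (hm.nonneg x t a)
      (integral_nonneg fun r => (min_abs_natCast_mem_Icc _ N).1)) (Finset.mem_univ a)

theorem integral_opfv_term {C : Type*} [DecidableEq C] (hP : IsLoggedLaw P μx μt π0 κ)
    (hm : IsLoggingModel π0 κ) {πe q fhat : 𝒳 → ℝ → 𝒜 → ℝ}
    (hq : ∀ x t a, ∫ r, r ∂κ x t a = q x t a)
    {φ : ℝ → C} {t' pφ : ℝ} (hπe : ∀ x a, 0 ≤ πe x t' a)
    (hcommon : ∀ᵐ t ∂μt, ∀ x a, 0 < πe x t' a → 0 < π0 x t a)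
    (hpφ : pφ = μt.real {s | φ s = φ t'}) (hpφ0 : pφ ≠ 0) {est : 𝒳 × ℝ × 𝒜 × ℝ → ℝ}
    (hest : ∀ x t a r, est (x, t, a, r) =
      (if φ t = φ t' then (1 : ℝ) else 0) / pφ * (πe x t' a / π0 x t a) * (r - fhat x t a)
        + ∑ a', πe x t' a' * fhat x t' a')
    (hInt : Integrable est P) (hVInt : Integrable (fun x => ∑ a, πe x t' a * q x t' a) μx)
    (hBInt : Integrable (fun p : 𝒳 × ℝ =>
      ∑ a, πe p.1 t' a * ((if φ p.2 = φ t' then (1 : ℝ) else 0) / pφ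
        * ((q p.1 p.2 a - q p.1 t' a) - (fhat p.1 p.2 a - fhat p.1 t' a)))) (μx.prod μt)) :
    ∫ z, est z ∂P
      = ∫ x, (∫ t, (∑ a, πe x t' a * ((if φ t = φ t' then (1 : ℝ) else 0) / pφ
          * ((q x t a - q x t' a) - (fhat x t a - fhat x t' a)))) ∂μt) ∂μx
        + ∫ x, ∑ a, πe x t' a * q x t' a ∂μx := by
  set H : 𝒳 × ℝ → ℝ := fun p => ∑ a, πe p.1 t' a
    * ((if φ p.2 = φ t' then (1 : ℝ) else 0) / pφ
      * ((q p.1 p.2 a - q p.1 t' a) - (fhat p.1 p.2 a - fhat p.1 t' a)))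
  set V : 𝒳 → ℝ := fun x => ∑ a, πe x t' a * q x t' a
  obtain ⟨hHint, hHeq⟩ := hP.integral_comp_fst_snd hm hBInt
  obtain ⟨hVint, hVeq⟩ : Integrable (fun z => V z.1) P ∧
      ∫ z, V z.1 ∂P = ∫ x, ∫ _t, V x ∂μt ∂μx :=
    hP.integral_comp_fst_snd hm (hVInt.comp_fst μt)
  set ψ : 𝒳 × ℝ × 𝒜 × ℝ → ℝ := fun z => est z - (H (z.1, z.2.1) + V z.1)
  have hψint : Integrable ψ P := hInt.sub (hHint.add hVint)
  have hψ : ∀ x t a r, ψ (x, t, a, r) =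
      (if φ t = φ t' then (1 : ℝ) else 0) / pφ * (πe x t' a / π0 x t a) * (r - fhat x t a)
        + ∑ a', πe x t' a' * fhat x t' a' - (H (x, t) + V x) := fun x t a r => by
    simp only [ψ, hest]
  have hψ0 : ∫ z, ψ z ∂P = 0 := by
    rw [hP ψ hψint]
    refine integral_eq_zero_of_ae ?_
    filter_upwards [hP.ae_ae_integrable_section hm hψint fun x t a => by
      simp_rw [hψ]; fun_prop] with x hx
    have hres : (fun t => condMean π0 κ ψ x t) =ᵐ[μt] fun t =>
        (∑ a, πe x t' a * (q x t' a - fhat x t' a))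
          * ((if φ t = φ t' then (1 : ℝ) else 0) / pφ - 1) := by
      filter_upwards [hx, hcommon] with t hxt hct
      exact hm.condMean_opfv_residual (hq x t) (hπe x) (hct x) (hψ x t) hxt
    rw [integral_congr_ae hres, hpφ, Pi.zero_apply]
    exact integral_mul_ite_div_sub_one (fun s => φ s = φ t') (hpφ ▸ hpφ0) _
  calc ∫ z, est z ∂P = ∫ z, (ψ z + (H (z.1, z.2.1) + V z.1)) ∂P := by simp [ψ]
    _ = _ := by
      rw [integral_add (g := fun z => H (z.1, z.2.1) + V z.1) hψint (hHint.add hVint),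
        integral_add hHint hVint, hψ0, hHeq, hVeq]
      simp only [integral_const, probReal_univ, one_smul, zero_add]
      rfl

end IsLoggedLaw

end LoggedData

theorem opfv_bias_general
    {𝒳 : Type*} [MeasurableSpace 𝒳] {𝒜 : Type*} [Fintype 𝒜] [MeasurableSpace 𝒜]
    {C : Type*} [DecidableEq C]
    -- time horizon of the logged data
    (T : ℝ)
    -- stationary context distribution p(x) and time distribution p(t), supported on [0,T]
    (μx : Measure 𝒳) [IsProbabilityMeasure μx]
    (μt : Measure ℝ) [IsProbabilityMeasure μt]
    (hμtsupp : μt (Set.Icc 0 T) = 1)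
    -- logging policy, evaluation policy, expected reward, regression model
    (π0 πe q fhat : 𝒳 → ℝ → 𝒜 → ℝ)
    (hπ0nonneg : ∀ x t a, 0 ≤ π0 x t a) (hπ0sum : ∀ x t, ∑ a, π0 x t a = 1)
    (hπenonneg : ∀ x t a, 0 ≤ πe x t a)
    -- reward distributions with conditional mean q
    (κ : 𝒳 → ℝ → 𝒜 → Measure ℝ) (hκ : ∀ x t a, IsProbabilityMeasure (κ x t a))
    (hq : ∀ x t a, ∫ r, r ∂(κ x t a) = q x t a)
    -- time feature function and target time
    (φ : ℝ → C) (t' : ℝ)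
    -- marginal probability of the target time feature, p(φ(t'))
    (pφ : ℝ) (hpφdef : pφ = (μt ({s | φ s = φ t'} ∩ Set.Icc 0 T)).toReal)
    -- Common Time Feature Support
    (hpφpos : 0 < pφ)
    -- Common Support
    (hcommon : ∀ x a, ∀ t ∈ Set.Icc 0 T, 0 < πe x t' a → 0 < π0 x t a)
    -- logged data: n i.i.d. draws from P, the joint law of (x, t, a, r)
    (n : ℕ) (hn : 0 < n)
    (P : Measure (𝒳 × ℝ × 𝒜 × ℝ)) [IsProbabilityMeasure P]
    (hP : ∀ g : 𝒳 × ℝ × 𝒜 × ℝ → ℝ, Integrable g P →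
      ∫ z, g z ∂P
        = ∫ x, (∫ t, (∑ a, π0 x t a * (∫ r, g (x, t, a, r) ∂(κ x t a))) ∂μt) ∂μx)
    -- per-sample term of the OPFV estimator
    (est : 𝒳 × ℝ × 𝒜 × ℝ → ℝ)
    (hest : ∀ x t a r, est (x, t, a, r) =
      (if φ t = φ t' then (1 : ℝ) else 0) / pφ * (πe x t' a / π0 x t a)
          * (r - fhat x t a)
        + ∑ a', πe x t' a' * fhat x t' a')
    -- integrability (all expectations are assumed well-defined)
    (hInt : Integrable est P)
    (hVInt : Integrable (fun x => ∑ a, πe x t' a * q x t' a) μx)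
    (hBInt : Integrable (fun p : 𝒳 × ℝ =>
      ∑ a, πe p.1 t' a * ((if φ p.2 = φ t' then (1 : ℝ) else 0) / pφ
        * ((q p.1 p.2 a - q p.1 t' a) - (fhat p.1 p.2 a - fhat p.1 t' a))))
      (μx.prod μt)) :
    -- Bias(V̂^OPFV) = E_{p(x,t) π_e(a|x,t')}[(𝕀_φ(t,t')/p(φ(t'))) (Δ_q − Δ_{f̂})]
    (∫ D : Fin n → 𝒳 × ℝ × 𝒜 × ℝ, (n : ℝ)⁻¹ * ∑ i, est (D i)
        ∂(Measure.pi fun _ => P))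
      - (∫ x, ∑ a, πe x t' a * q x t' a ∂μx)
      = ∫ x, (∫ t, (∑ a, πe x t' a * ((if φ t = φ t' then (1 : ℝ) else 0) / pφ
          * ((q x t a - q x t' a) - (fhat x t a - fhat x t' a)))) ∂μt) ∂μx := by
  have hIcc : μt (Icc 0 T)ᶜ = 0 := (prob_compl_eq_zero_iff measurableSet_Icc).2 hμtsupp
  have hcommon' : ∀ᵐ t ∂μt, ∀ x a, 0 < πe x t' a → 0 < π0 x t a := by
    filter_upwards [measure_eq_zero_iff_ae_notMem.1 hIcc] with t ht x a
    exact hcommon x a t (not_not.1 ht)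
  have hpφ : pφ = μt.real {s | φ s = φ t'} := by
    rw [hpφdef, measure_inter_conull hIcc, measureReal_def]
  rw [integral_mean_pi hn.ne' hInt,
    IsLoggedLaw.integral_opfv_term hP ⟨hπ0nonneg, hπ0sum, hκ⟩ hq (fun x a => hπenonneg x t' a)
      hcommon' hpφ hpφpos.ne' hest hInt hVInt hBInt]
  ring

/-- **Bias of the OPFV estimator (Theorem 3.3).**
Under Common Support, Common Time Feature Support and a stationary context distribution
(modeled as the product `μx.prod μt`), for any target time `t' > T`,
`Bias(V̂^OPFV_{t'}(π_e;𝒟)) = E_{p(x,t) π_e(a|x,t')}[ (𝕀_φ(t,t')/p(φ(t')))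
  · (Δ_q(x,t,t',a) − Δ_{f̂}(x,t,t',a)) ]`. -/
theorem opfv_bias
    {𝒳 : Type*} [MeasurableSpace 𝒳] {𝒜 : Type*} [Fintype 𝒜] [MeasurableSpace 𝒜]
    {C : Type*} [DecidableEq C]
    -- time horizon of the logged data
    (T : ℝ) (hT : 0 < T)
    -- stationary context distribution p(x) and time distribution p(t), supported on [0,T]
    (μx : Measure 𝒳) [IsProbabilityMeasure μx]
    (μt : Measure ℝ) [IsProbabilityMeasure μt]
    (hμtsupp : μt (Set.Icc 0 T) = 1)
    -- logging policy, evaluation policy, expected reward, regression model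
    (π0 πe q fhat : 𝒳 → ℝ → 𝒜 → ℝ)
    (hπ0nonneg : ∀ x t a, 0 ≤ π0 x t a) (hπ0sum : ∀ x t, ∑ a, π0 x t a = 1)
    (hπenonneg : ∀ x t a, 0 ≤ πe x t a) (hπesum : ∀ x t, ∑ a, πe x t a = 1)
    -- reward distributions with conditional mean q
    (κ : 𝒳 → ℝ → 𝒜 → Measure ℝ) (hκ : ∀ x t a, IsProbabilityMeasure (κ x t a))
    (hq : ∀ x t a, ∫ r, r ∂(κ x t a) = q x t a)
    -- time feature function and target time
    (φ : ℝ → C) (t' : ℝ) (ht' : T < t')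
    -- marginal probability of the target time feature, p(φ(t'))
    (pφ : ℝ) (hpφdef : pφ = (μt ({s | φ s = φ t'} ∩ Set.Icc 0 T)).toReal)
    -- Common Time Feature Support
    (hpφpos : 0 < pφ)
    -- Common Support
    (hcommon : ∀ x a, ∀ t ∈ Set.Icc 0 T, 0 < πe x t' a → 0 < π0 x t a)
    -- logged data: n i.i.d. draws from P, the joint law of (x, t, a, r)
    (n : ℕ) (hn : 0 < n)
    (P : Measure (𝒳 × ℝ × 𝒜 × ℝ)) [IsProbabilityMeasure P]
    (hP : ∀ g : 𝒳 × ℝ × 𝒜 × ℝ → ℝ, Integrable g P →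
      ∫ z, g z ∂P
        = ∫ x, (∫ t, (∑ a, π0 x t a * (∫ r, g (x, t, a, r) ∂(κ x t a))) ∂μt) ∂μx)
    -- per-sample term of the OPFV estimator
    (est : 𝒳 × ℝ × 𝒜 × ℝ → ℝ)
    (hest : ∀ x t a r, est (x, t, a, r) =
      (if φ t = φ t' then (1 : ℝ) else 0) / pφ * (πe x t' a / π0 x t a)
          * (r - fhat x t a)
        + ∑ a', πe x t' a' * fhat x t' a')
    -- integrability (all expectations are assumed well-defined)
    (hInt : Integrable est P)
    (hVInt : Integrable (fun x => ∑ a, πe x t' a * q x t' a) μx)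
    (hBInt : Integrable (fun p : 𝒳 × ℝ =>
      ∑ a, πe p.1 t' a * ((if φ p.2 = φ t' then (1 : ℝ) else 0) / pφ
        * ((q p.1 p.2 a - q p.1 t' a) - (fhat p.1 p.2 a - fhat p.1 t' a))))
      (μx.prod μt)) :
    -- Bias(V̂^OPFV) = E_{p(x,t) π_e(a|x,t')}[(𝕀_φ(t,t')/p(φ(t'))) (Δ_q − Δ_{f̂})]
    (∫ D : Fin n → 𝒳 × ℝ × 𝒜 × ℝ, (n : ℝ)⁻¹ * ∑ i, est (D i)
        ∂(Measure.pi fun _ => P))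
      - (∫ x, ∑ a, πe x t' a * q x t' a ∂μx)
      = ∫ x, (∫ t, (∑ a, πe x t' a * ((if φ t = φ t' then (1 : ℝ) else 0) / pφ
          * ((q x t a - q x t' a) - (fhat x t a - fhat x t' a)))) ∂μt) ∂μx :=
  opfv_bias_general T μx μt hμtsupp π0 πe q fhat hπ0nonneg hπ0sum hπenonneg κ hκ hq φ t' pφ hpφdef
    hpφpos hcommon n hn P hP est hest hInt hVInt hBInt
end

section
/- Variance of the OPFV estimator (Proposition 3.4): Assume Common Support, Common Time Feature Support, Conditional Pairwise Correctness, and the stationary-context assumption. Then n · Var[V̂^{OPFV}_{t'}(π_e;𝒟)] = E_{p(x,t) π₀(a|x,t)}[ ( (𝕀_φ(t,t')/p(φ(t'))) · (π_e(a|x,t')/π₀(a|x,t)) )² σ²(x,t,a) ] + E_{p(x,t)}[ (𝕀_φ(t,t')/p(φ(t')))² · Var_{a~π₀(·|x,t)}[ (π_e(a|x,t')/π₀(a|x,t)) Δ_{q,f̂}(x,t',a) ] ] + Var_{t~p(t)}[ 𝕀_φ(t,t')/p(φ(t')) ] · E_{p(x)}[ ( E_{a~π_e(·|x,t')}[Δ_{q,f̂}(x,t',a)]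 )² ] + Var_{x~p(x)}[ E_{a~π_e(·|x,t')}[q(x,t',a)] ]. -/
/-!
By independence, `n · Var[V̂]` is the variance of a single summand `est(x, t, a, r)`, i.e.
`E[est²] - E[est]²`, and both moments are computed by integrating out `r`, then `a`, then `t`,
then `x`. Given `(x, t, a)`, `est` is affine in `r`, so the `r`-integrals produce `q` and `σ²`;
Common Support turns `π₀ · (πₑ / π₀)` into `πₑ` and Conditional Pairwise Correctness replaces
`q - f̂` at time `t` by its value at `t'` wherever the time weight `𝕀_φ(t,t') / p(φ(t'))` is
nonzero. What is left depends on `t` only through that weight `I`, whose mean is `1` and whose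
variance produces the third term.

The law of the data is only known through the iterated integral formula for integrable
functions, with no measurability of `π₀`, `κ` or `φ`. A complement trick (`layer u` and
`layer (c - u)` add up to `c`, while `∫` of a non-measurable function is `0`) shows that the
inner layers of bounded measurable functions are a.e. measurable, and monotone convergence then
yields the formula for all measurable `ℝ≥0∞`-valued functions; this transfers null sets and
integrability from `P` to the slices `r ↦ est(x, t, a, r)`. If `I` itself is not a.e.
measurable, its integral is `0` instead of `1`, but then the a.e. measurability of
`t ↦ I t · S x` forces `S x = 0`.
-/

open MeasureTheory Filter ProbabilityTheory
open scoped ENNReal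

section IntegralFacts

variable {α : Type*} [MeasurableSpace α] {μ : Measure α}

lemma integrable_of_mem_Icc [IsFiniteMeasure μ] {f : α → ℝ} {c : ℝ}
    (hf : AEStronglyMeasurable f μ) (h : ∀ a, f a ∈ Set.Icc 0 c) : Integrable f μ :=
  .of_bound hf c (Eventually.of_forall fun a => by
    rw [Real.norm_of_nonneg (h a).1]; exact (h a).2)

lemma integral_mem_Icc [IsProbabilityMeasure μ] {f : α → ℝ} {c : ℝ}
    (h : ∀ a, f a ∈ Set.Icc 0 c) : ∫ a, f a ∂μ ∈ Set.Icc 0 c :=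
  ⟨integral_nonneg fun a => (h a).1, by
    simpa using integral_mono_of_nonneg (Eventually.of_forall fun a => (h a).1)
      (integrable_const (μ := μ) c) (Eventually.of_forall fun a => (h a).2)⟩

lemma ae_eq_of_le_of_integral_eq [IsProbabilityMeasure μ] {f : α → ℝ} {c : ℝ}
    (hf : ∀ a, f a ≤ c) (h : ∫ a, f a ∂μ = c) (hc : c ≠ 0) : ∀ᵐ a ∂μ, f a = c := by
  have hfi : Integrable f μ := by
    by_contra hfi
    exact hc (h ▸ integral_undef hfi)
  have hgap : ∫ a, (c - f a) ∂μ = 0 := by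
    rw [integral_sub (integrable_const c) hfi, h]
    simp
  filter_upwards [(integral_eq_zero_iff_of_nonneg (fun a => sub_nonneg.2 (hf a))
    ((integrable_const c).sub hfi)).1 hgap] with a ha
  exact (sub_eq_zero.1 ha).symm

/-- If `f` were not integrable, `∫ f = 0` would force `g = c` a.e. and hence `f = 0` a.e. -/
lemma integrable_of_integral_add_integral_eq [IsProbabilityMeasure μ] {f g : α → ℝ} {c : ℝ}
    (hf : ∀ a, 0 ≤ f a) (hfg : ∀ a, f a + g a ≤ c) (h : ∫ a, f a ∂μ + ∫ a, g a ∂μ = c)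
    (hc : c ≠ 0) :
    Integrable f μ := by
  by_contra hfi
  rw [integral_undef hfi, zero_add] at h
  have hf0 : f =ᵐ[μ] 0 := by
    filter_upwards [ae_eq_of_le_of_integral_eq (fun a => by linarith [hf a, hfg a]) h hc]
      with a ha
    show f a = 0
    exact le_antisymm (by linarith [hfg a]) (hf a)
  exact hfi ((integrable_zero α ℝ μ).congr hf0.symm)

lemma integral_mul_const_eq_self {I : α → ℝ} {s : ℝ}
    (hI : AEStronglyMeasurable I μ → ∫ a, I a ∂μ = 1)
    (hIs : AEStronglyMeasurable (fun a => I a * s) μ) : (∫ a, I a ∂μ) * s = s := by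
  rcases eq_or_ne s 0 with rfl | hs
  · simp
  rw [hI ((hIs.mul_const s⁻¹).congr (Eventually.of_forall fun a => by field_simp)), one_mul]

end IntegralFacts

lemma integral_affine_moments {ν : Measure ℝ} [IsProbabilityMeasure ν] {m σ2 b c d : ℝ}
    (hm : ∫ r, r ∂ν = m) (hσ2 : σ2 = ∫ r, (r - m) ^ 2 ∂ν)
    (h1 : Integrable (fun r => c * (r - b) + d) ν)
    (h2 : Integrable (fun r => (c * (r - b) + d) ^ 2) ν) :
    ∫ r, c * (r - b) + d ∂ν = c * (m - b) + d ∧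
      ∫ r, (c * (r - b) + d) ^ 2 ∂ν = c ^ 2 * σ2 + (c * (m - b) + d) ^ 2 := by
  rcases eq_or_ne c 0 with rfl | hc
  · simp
  have hX : MemLp (fun r => c * (r - b) + d) 2 ν := (memLp_two_iff_integrable_sq h1.1).2 h2
  have hid : MemLp (fun r : ℝ => r) 2 ν := by
    convert ((hX.sub (memLp_const d)).const_mul c⁻¹).add (memLp_const b) using 1
    funext r
    simp only [Pi.add_apply, Pi.sub_apply]
    field_simp
    ring
  have hmean : ∫ r, c * (r - b) + d ∂ν = c * (m - b) + d := by
    have hr := hid.integrable one_le_two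
    have hr' : Integrable (fun r => c * (r - b)) ν := (hr.sub (integrable_const b)).const_mul c
    rw [integral_add hr' (integrable_const d), integral_const_mul,
      integral_sub hr (integrable_const b), hm]
    simp
  refine ⟨hmean, ?_⟩
  have hvar := variance_eq_sub hX
  rw [variance_add_const (by fun_prop), variance_const_mul, variance_sub_const (by fun_prop),
    variance_eq_integral (by fun_prop), hm, ← hσ2] at hvar
  simp only [Pi.pow_apply] at hvar
  rw [hmean] at hvar
  linarith

lemma natCast_mul_variance_sampleMean {Z : Type*} [MeasurableSpace Z] {P : Measure Z}
    [IsProbabilityMeasure P] {f : Z → ℝ} (hf : MemLp f 2 P) {n : ℕ} (hn : n ≠ 0) :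
    (n : ℝ) * ∫ D : Fin n → Z, ((n : ℝ)⁻¹ * ∑ i, f (D i)
        - ∫ D' : Fin n → Z, (n : ℝ)⁻¹ * ∑ i, f (D' i) ∂(Measure.pi fun _ => P)) ^ 2
        ∂(Measure.pi fun _ => P)
      = ∫ z, f z ^ 2 ∂P - (∫ z, f z ∂P) ^ 2 := by
  have hsum : (fun D : Fin n → Z => ∑ i, f (D i)) = ∑ i, fun D => f (D i) := by
    funext D
    simp
  have hmem : MemLp (fun D : Fin n → Z => (n : ℝ)⁻¹ * ∑ i, f (D i)) 2
      (Measure.pi fun _ => P) :=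
    (memLp_finsetSum _ fun i _ =>
      hf.comp_measurePreserving (measurePreserving_eval _ i)).const_mul _
  rw [← variance_eq_integral hmem.aemeasurable, variance_const_mul, hsum,
    variance_sum_pi (X := fun _ => f) fun _ => hf, variance_eq_sub hf]
  simp only [Finset.sum_const, Finset.card_univ, Fintype.card_fin, nsmul_eq_mul, Pi.pow_apply]
  field_simp

lemma integral_ite_div_eq_one {T : Type*} [MeasurableSpace T] {μ : Measure T}
    [IsProbabilityMeasure μ] {p : T → Prop} [DecidablePred p] {K : Set T} (hK : MeasurableSet K)
    (hK1 : μ K = 1) {c : ℝ} (hc : c = (μ ({t | p t} ∩ K)).toReal) (hc0 : 0 < c)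
    (hm : AEStronglyMeasurable (fun t => (if p t then (1 : ℝ) else 0) / c) μ) :
    ∫ t, (if p t then (1 : ℝ) else 0) / c ∂μ = 1 := by
  have hind : (fun t => (if p t then (1 : ℝ) else 0)) = {t | p t}.indicator fun _ => 1 := by
    funext t
    simp [Set.indicator_apply]
  have hnull : NullMeasurableSet {t | p t} μ := by
    refine (aemeasurable_indicator_const_iff (1 : ℝ)).1 ?_
    rw [← hind]
    exact (hm.const_mul c).aemeasurable.congr
      (Eventually.of_forall fun t => by field_simp)
  rw [integral_div, hind, integral_indicator₀ hnull, setIntegral_const, smul_eq_mul, mul_one,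
    measureReal_def, ← measure_inter_conull (t := K) ((prob_compl_eq_zero_iff hK).2 hK1), ← hc]
  exact div_self hc0.ne'

section TwoLevel

variable {X T : Type*} [MeasurableSpace X] [MeasurableSpace T] {μx : Measure X} {μt : Measure T}
  {I : T → ℝ} {S F V : X → ℝ} {c : ℝ}

lemma integrable_mul_const_pow_of_abs_le [IsFiniteMeasure μt] {s : ℝ} (hI : ∀ t, |I t| ≤ c)
    (hIs : AEStronglyMeasurable (fun t => I t * s) μt) (k : ℕ) :
    Integrable (fun t => (I t * s) ^ k) μt :=
  .of_bound (hIs.pow k) ((c * |s|) ^ k) (Eventually.of_forall fun t => by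
    rw [Real.norm_eq_abs, abs_pow, abs_mul]
    exact pow_le_pow_left₀ (by positivity)
      (mul_le_mul_of_nonneg_right (hI t) (abs_nonneg s)) k)

lemma integral_integral_of_ae_eq_mul_add [IsProbabilityMeasure μt] {L : X → T → ℝ}
    (hI : ∀ t, |I t| ≤ c)
    (hI1 : AEStronglyMeasurable I μt → ∫ t, I t ∂μt = 1)
    (hIS : ∀ᵐ x ∂μx, AEStronglyMeasurable (fun t => I t * S x) μt)
    (hSF : ∀ x, S x + F x = V x) (hL : ∀ᵐ x ∂μx, ∀ᵐ t ∂μt, L x t = I t * S x + F x) :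
    ∫ x, ∫ t, L x t ∂μt ∂μx = ∫ x, V x ∂μx := by
  refine integral_congr_ae ?_
  filter_upwards [hIS, hL] with x hm hx
  rw [integral_congr_ae hx,
    integral_add (by simpa using integrable_mul_const_pow_of_abs_le hI hm 1) (integrable_const _),
    integral_mul_const, integral_mul_const_eq_self hI1 hm, integral_const, ← hSF]
  simp

lemma integral_integral_of_ae_eq_sq [SFinite μx] [IsProbabilityMeasure μt] {L A B : X → T → ℝ}
    (hI : ∀ t, |I t| ≤ c)
    (hI1 : AEStronglyMeasurable I μt → ∫ t, I t ∂μt = 1)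
    (hIS : ∀ᵐ x ∂μx, AEStronglyMeasurable (fun t => I t * S x) μt)
    (hA : Integrable (fun p : X × T => A p.1 p.2) (μx.prod μt))
    (hB : Integrable (fun p : X × T => B p.1 p.2) (μx.prod μt))
    (hS : Integrable (fun x => S x ^ 2) μx) (hV : Integrable (fun x => V x ^ 2) μx)
    (hSF : ∀ x, S x + F x = V x)
    (hL : ∀ᵐ x ∂μx, ∀ᵐ t ∂μt,
      L x t = A x t + B x t + (I t * S x) ^ 2 + 2 * (I t * S x) * F x + F x ^ 2) :
    ∫ x, ∫ t, L x t ∂μt ∂μx = ∫ x, ∫ t, A x t ∂μt ∂μx + ∫ x, ∫ t, B x t ∂μt ∂μx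
      + (∫ t, I t ^ 2 ∂μt) * ∫ x, S x ^ 2 ∂μx + (∫ x, V x ^ 2 ∂μx - ∫ x, S x ^ 2 ∂μx) := by
  have hx : ∀ᵐ x ∂μx, ∫ t, L x t ∂μt = ∫ t, A x t ∂μt + ∫ t, B x t ∂μt
      + (∫ t, I t ^ 2 ∂μt) * S x ^ 2 + (V x ^ 2 - S x ^ 2) := by
    filter_upwards [hIS, hL, hA.prod_right_ae, hB.prod_right_ae] with x hm hx hAx hBx
    have hY : Integrable (fun t => I t * S x) μt := by
      simpa using integrable_mul_const_pow_of_abs_le hI hm 1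
    have hY2 := integrable_mul_const_pow_of_abs_le hI hm 2
    rw [integral_congr_ae hx]
    simp (disch := fun_prop) only [integral_add, integral_const_mul, integral_mul_const]
    simp only [mul_pow, integral_mul_const, integral_mul_const_eq_self hI1 hm, integral_const,
      probReal_univ, one_smul, ← hSF]
    ring
  have hAi : Integrable (fun x => ∫ t, A x t ∂μt) μx := hA.integral_prod_left
  have hBi : Integrable (fun x => ∫ t, B x t ∂μt) μx := hB.integral_prod_left
  rw [integral_congr_ae hx]
  simp (disch := fun_prop) only [integral_add, integral_sub, integral_const_mul]

lemma sq_integral_mul_integral_sq (hI1 : AEStronglyMeasurable I μt → ∫ t, I t ∂μt = 1)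
    (hIS : ∀ᵐ x ∂μx, AEStronglyMeasurable (fun t => I t * S x) μt) :
    (∫ t, I t ∂μt) ^ 2 * ∫ x, S x ^ 2 ∂μx = ∫ x, S x ^ 2 ∂μx := by
  rw [← integral_const_mul]
  refine integral_congr_ae ?_
  filter_upwards [hIS] with x hm
  linear_combination ((∫ t, I t ∂μt) * S x + S x) * integral_mul_const_eq_self hI1 hm

end TwoLevel

lemma measurable_slice {𝒳 𝒯 𝒜 ℛ : Type*} [MeasurableSpace 𝒳] [MeasurableSpace 𝒯]
    [MeasurableSpace 𝒜] [MeasurableSpace ℛ] (x : 𝒳) (t : 𝒯) (a : 𝒜) :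
    Measurable (fun r : ℛ => (x, t, a, r)) := by
  fun_prop

section Disintegration

variable {𝒳 𝒯 𝒜 ℛ : Type*} [MeasurableSpace ℛ] [Fintype 𝒜]

noncomputable def layer (π0 : 𝒳 → 𝒯 → 𝒜 → ℝ) (κ : 𝒳 → 𝒯 → 𝒜 → Measure ℛ)
    (g : 𝒳 × 𝒯 × 𝒜 × ℛ → ℝ) (x : 𝒳) (t : 𝒯) : ℝ :=
  ∑ a, π0 x t a * ∫ r, g (x, t, a, r) ∂κ x t a

noncomputable def lintegralLayer (π0 : 𝒳 → 𝒯 → 𝒜 → ℝ) (κ : 𝒳 → 𝒯 → 𝒜 → Measure ℛ)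
    (W : 𝒳 × 𝒯 × 𝒜 × ℛ → ℝ≥0∞) (x : 𝒳) (t : 𝒯) : ℝ≥0∞ :=
  ∑ a, ENNReal.ofReal (π0 x t a) * ∫⁻ r, W (x, t, a, r) ∂κ x t a

section

variable {π0 : 𝒳 → 𝒯 → 𝒜 → ℝ} {κ : 𝒳 → 𝒯 → 𝒜 → Measure ℛ}
  {W W' : 𝒳 × 𝒯 × 𝒜 × ℛ → ℝ≥0∞} {x : 𝒳} {t : 𝒯} {a : 𝒜}

lemma lintegralLayer_mono (h : W ≤ W') (x : 𝒳) (t : 𝒯) :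
    lintegralLayer π0 κ W x t ≤ lintegralLayer π0 κ W' x t := by
  unfold lintegralLayer
  gcongr with a
  exact h _

lemma lintegral_slice_lt_top_of_lintegralLayer_lt_top (h : lintegralLayer π0 κ W x t < ∞)
    (ha : 0 < π0 x t a) : ∫⁻ r, W (x, t, a, r) ∂κ x t a < ∞ := by
  rcases ENNReal.mul_lt_top_iff.1 (ENNReal.sum_lt_top.1 h a (Finset.mem_univ a))
    with ⟨-, h⟩ | h | h
  · exact h
  · exact absurd h (ENNReal.ofReal_pos.2 ha).ne'
  · simp [h]

lemma lintegral_slice_eq_zero_of_lintegralLayer_eq_zero (h : lintegralLayer π0 κ W x t = 0)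
    (ha : 0 < π0 x t a) : ∫⁻ r, W (x, t, a, r) ∂κ x t a = 0 :=
  (mul_eq_zero.1 (Finset.sum_eq_zero_iff.1 h a (Finset.mem_univ a))).resolve_left
    (ENNReal.ofReal_pos.2 ha).ne'

end

variable [MeasurableSpace 𝒳] [MeasurableSpace 𝒯] [MeasurableSpace 𝒜]

/-- `P` is the law of `(x, t, a, r)` with `x ~ μx`, `t ~ μt`, `a ~ π₀(·|x,t)`, `r ~ κ(·|x,t,a)`,
in the weak sense that the iterated integral formula is only required for `P`-integrable `g`
and nothing is assumed about the measurability of `π₀` and `κ`. -/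
structure IsDisintegration (P : Measure (𝒳 × 𝒯 × 𝒜 × ℛ)) (μx : Measure 𝒳) (μt : Measure 𝒯)
    (π0 : 𝒳 → 𝒯 → 𝒜 → ℝ) (κ : 𝒳 → 𝒯 → 𝒜 → Measure ℛ) : Prop where
  nonneg : ∀ x t a, 0 ≤ π0 x t a
  sum_eq_one : ∀ x t, ∑ a, π0 x t a = 1
  isProbabilityMeasure : ∀ x t a, IsProbabilityMeasure (κ x t a)
  integral_eq : ∀ g, Integrable g P → ∫ z, g z ∂P = ∫ x, ∫ t, layer π0 κ g x t ∂μt ∂μx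

namespace IsDisintegration

variable {P : Measure (𝒳 × 𝒯 × 𝒜 × ℛ)} {μx : Measure 𝒳} {μt : Measure 𝒯}
  {π0 : 𝒳 → 𝒯 → 𝒜 → ℝ} {κ : 𝒳 → 𝒯 → 𝒜 → Measure ℛ}

lemma integrable_slice_of_bounded (hD : IsDisintegration P μx μt π0 κ)
    {u : 𝒳 × 𝒯 × 𝒜 × ℛ → ℝ} (hu : Measurable u) {c : ℝ} (hu0 : ∀ z, 0 ≤ u z)
    (huc : ∀ z, u z ≤ c) (x : 𝒳) (t : 𝒯) (a : 𝒜) :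
    Integrable (fun r => u (x, t, a, r)) (κ x t a) :=
  have := hD.isProbabilityMeasure x t a
  integrable_of_mem_Icc (hu.comp (measurable_slice x t a)).aestronglyMeasurable
    fun _ => ⟨hu0 _, huc _⟩

lemma layer_mem_Icc (hD : IsDisintegration P μx μt π0 κ) {u : 𝒳 × 𝒯 × 𝒜 × ℛ → ℝ} {c : ℝ}
    (hu0 : ∀ z, 0 ≤ u z) (huc : ∀ z, u z ≤ c) (x : 𝒳) (t : 𝒯) :
    layer π0 κ u x t ∈ Set.Icc 0 c := by
  have hint : ∀ a, ∫ r, u (x, t, a, r) ∂κ x t a ∈ Set.Icc 0 c := fun a =>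
    have := hD.isProbabilityMeasure x t a
    integral_mem_Icc fun _ => ⟨hu0 _, huc _⟩
  refine ⟨Finset.sum_nonneg fun a _ => mul_nonneg (hD.nonneg x t a) (hint a).1, ?_⟩
  calc layer π0 κ u x t ≤ ∑ a, π0 x t a * c :=
        Finset.sum_le_sum fun a _ => mul_le_mul_of_nonneg_left (hint a).2 (hD.nonneg x t a)
    _ = c := by rw [← Finset.sum_mul, hD.sum_eq_one, one_mul]

lemma layer_const_sub (hD : IsDisintegration P μx μt π0 κ) {u : 𝒳 × 𝒯 × 𝒜 × ℛ → ℝ}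
    (hu : Measurable u) {c : ℝ} (hu0 : ∀ z, 0 ≤ u z) (huc : ∀ z, u z ≤ c) (d : ℝ) (x : 𝒳) (t : 𝒯) :
    layer π0 κ (fun z => d - u z) x t = d - layer π0 κ u x t := by
  have hint : ∀ a, ∫ r, (d - u (x, t, a, r)) ∂κ x t a = d - ∫ r, u (x, t, a, r) ∂κ x t a :=
    fun a => by
      have := hD.isProbabilityMeasure x t a
      rw [integral_sub (integrable_const d) (hD.integrable_slice_of_bounded hu hu0 huc x t a)]
      simp
  simp only [layer, hint, mul_sub, Finset.sum_sub_distrib, ← Finset.sum_mul, hD.sum_eq_one,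
    one_mul]

variable [IsProbabilityMeasure P] [IsProbabilityMeasure μx] [IsProbabilityMeasure μt]

/-- The complement trick: `layer u x` and `layer (c + 1 - u) x` add up to `c + 1`, so their
`t`-integrals add up to `c + 1` when `layer u x` is a.e. measurable and to `0` otherwise;
integrating over `x` gives `c + 1`, so the second case is `μx`-null. -/
lemma ae_aestronglyMeasurable_layer_of_bounded (hD : IsDisintegration P μx μt π0 κ)
    {u : 𝒳 × 𝒯 × 𝒜 × ℛ → ℝ} (hu : Measurable u) {c : ℝ} (hu0 : ∀ z, 0 ≤ u z)
    (huc : ∀ z, u z ≤ c) :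
    (∀ᵐ x ∂μx, AEStronglyMeasurable (layer π0 κ u x) μt) ∧
      AEStronglyMeasurable (fun x => ∫ t, layer π0 κ u x t ∂μt) μx := by
  set d := |c| + 1
  have hd : d ≠ 0 := by positivity
  have hud : ∀ z, u z ≤ d := fun z => (huc z).trans (by linarith [le_abs_self c])
  have hρ := hD.layer_mem_Icc hu0 hud
  set τ := fun x => ∫ t, layer π0 κ u x t ∂μt
  set τ' := fun x => ∫ t, (d - layer π0 κ u x t) ∂μt
  have hsum : ∀ x, AEStronglyMeasurable (layer π0 κ u x) μt → τ x + τ' x = d := fun x hm => by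
    simp only [τ, τ', integral_sub (integrable_const d) (integrable_of_mem_Icc hm (hρ x))]
    simp
  have hzero : ∀ x, ¬ AEStronglyMeasurable (layer π0 κ u x) μt → τ x + τ' x = 0 :=
    fun x hm => by
    have hm' : ¬ AEStronglyMeasurable (fun t => d - layer π0 κ u x t) μt := fun h =>
      hm ((aestronglyMeasurable_const.sub h).congr
        (Eventually.of_forall fun t => sub_sub_cancel _ _))
    simp only [τ, τ']
    rw [integral_undef fun h => hm h.1, integral_undef fun h => hm' h.1, add_zero]
  have hle : ∀ x, τ x + τ' x ≤ d := fun x => by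
    by_cases hm : AEStronglyMeasurable (layer π0 κ u x) μt
    · exact (hsum x hm).le
    · rw [hzero x hm]; positivity
  have hτ0 : ∀ x, 0 ≤ τ x := fun x => integral_nonneg fun t => (hρ x t).1
  have hτ'0 : ∀ x, 0 ≤ τ' x := fun x => integral_nonneg fun t => sub_nonneg.2 (hρ x t).2
  have hui : Integrable u P :=
    integrable_of_mem_Icc hu.aestronglyMeasurable fun z => ⟨hu0 z, hud z⟩
  have htot : ∫ x, τ x ∂μx + ∫ x, τ' x ∂μx = d := by
    have h := hD.integral_eq (fun z => d - u z) ((integrable_const d).sub hui)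
    simp only [hD.layer_const_sub hu hu0 hud, integral_sub (integrable_const d) hui,
      hD.integral_eq u hui] at h
    simp only [τ, τ', ← h]
    simp
  have hτi : Integrable τ μx := integrable_of_integral_add_integral_eq hτ0 hle htot hd
  have hτ'i : Integrable τ' μx := integrable_of_integral_add_integral_eq (g := τ) hτ'0
    (fun x => by linarith [hle x]) (by linarith) hd
  refine ⟨?_, hτi.aestronglyMeasurable⟩
  filter_upwards [ae_eq_of_le_of_integral_eq hle (by rwa [integral_add hτi hτ'i]) hd] with x hx
  by_contra hm
  exact hd (hx.symm.trans (hzero x hm))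

lemma lintegral_eq_of_le (hD : IsDisintegration P μx μt π0 κ) {W : 𝒳 × 𝒯 × 𝒜 × ℛ → ℝ≥0∞}
    (hW : Measurable W) {c : NNReal} (hWc : ∀ z, W z ≤ c) :
    (∀ᵐ x ∂μx, AEMeasurable (lintegralLayer π0 κ W x) μt) ∧
      AEMeasurable (fun x => ∫⁻ t, lintegralLayer π0 κ W x t ∂μt) μx ∧
      ∫⁻ z, W z ∂P = ∫⁻ x, ∫⁻ t, lintegralLayer π0 κ W x t ∂μt ∂μx := by
  set u := fun z => (W z).toReal
  have hu : Measurable u := hW.ennreal_toReal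
  have hu0 : ∀ z, 0 ≤ u z := fun z => ENNReal.toReal_nonneg
  have huc : ∀ z, u z ≤ c := fun z => ENNReal.toReal_le_coe_of_le_coe (hWc z)
  have hWu : W = fun z => ENNReal.ofReal (u z) := funext fun z =>
    (ENNReal.ofReal_toReal (ne_top_of_le_ne_top ENNReal.coe_ne_top (hWc z))).symm
  have hρ := hD.layer_mem_Icc hu0 huc
  have hlayer : lintegralLayer π0 κ W = fun x t => ENNReal.ofReal (layer π0 κ u x t) := by
    funext x t
    rw [layer, ENNReal.ofReal_sum_of_nonneg fun a _ =>
      mul_nonneg (hD.nonneg x t a) (integral_nonneg fun r => hu0 _)]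
    refine Finset.sum_congr rfl fun a _ => ?_
    rw [ENNReal.ofReal_mul (hD.nonneg x t a), ofReal_integral_eq_lintegral_ofReal
      (hD.integrable_slice_of_bounded hu hu0 huc x t a) (Eventually.of_forall fun r => hu0 _),
      hWu]
  obtain ⟨h1, h2⟩ := hD.ae_aestronglyMeasurable_layer_of_bounded hu hu0 huc
  have hint : ∀ᵐ x ∂μx, ∫⁻ t, lintegralLayer π0 κ W x t ∂μt
      = ENNReal.ofReal (∫ t, layer π0 κ u x t ∂μt) := by
    filter_upwards [h1] with x hx
    rw [hlayer, ofReal_integral_eq_lintegral_ofReal (integrable_of_mem_Icc hx (hρ x))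
      (Eventually.of_forall fun t => (hρ x t).1)]
  have hui : Integrable u P :=
    integrable_of_mem_Icc hu.aestronglyMeasurable fun z => ⟨hu0 z, huc z⟩
  refine ⟨?_, h2.aemeasurable.ennreal_ofReal.congr (hint.mono fun x hx => hx.symm), ?_⟩
  · filter_upwards [h1] with x hx
    rw [hlayer]
    exact hx.aemeasurable.ennreal_ofReal
  · rw [lintegral_congr_ae hint, ← ofReal_integral_eq_lintegral_ofReal
      (integrable_of_mem_Icc h2 fun x => integral_mem_Icc (hρ x))
      (Eventually.of_forall fun x => integral_nonneg fun t => (hρ x t).1),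
      ← hD.integral_eq u hui, ofReal_integral_eq_lintegral_ofReal hui
      (Eventually.of_forall hu0), hWu]

lemma lintegral_eq (hD : IsDisintegration P μx μt π0 κ) {W : 𝒳 × 𝒯 × 𝒜 × ℛ → ℝ≥0∞}
    (hW : Measurable W) :
    (∀ᵐ x ∂μx, AEMeasurable (lintegralLayer π0 κ W x) μt) ∧
      AEMeasurable (fun x => ∫⁻ t, lintegralLayer π0 κ W x t ∂μt) μx ∧
      ∫⁻ z, W z ∂P = ∫⁻ x, ∫⁻ t, lintegralLayer π0 κ W x t ∂μt ∂μx := by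
  set Wn : ℕ → 𝒳 × 𝒯 × 𝒜 × ℛ → ℝ≥0∞ := fun n z => min (W z) n
  have hWn : ∀ n, Measurable (Wn n) := fun n => hW.min measurable_const
  have hmono : Monotone Wn := fun m n hmn z => min_le_min le_rfl (Nat.cast_le.2 hmn)
  have hsup : ∀ z, ⨆ n, Wn n z = W z := fun z => by
    rw [← inf_iSup_eq, ENNReal.iSup_natCast, inf_top_eq]
  have hbdd := fun n : ℕ => hD.lintegral_eq_of_le (hWn n) (c := n) fun z => min_le_right _ _
  have hlmono : ∀ x t, Monotone fun n => lintegralLayer π0 κ (Wn n) x t :=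
    fun x t m n h => lintegralLayer_mono (hmono h) x t
  have hlayer : ∀ x,
      lintegralLayer π0 κ W x = fun t => ⨆ n, lintegralLayer π0 κ (Wn n) x t := by
    intro x
    funext t
    simp only [lintegralLayer]
    rw [← ENNReal.finsetSum_iSup_of_monotone
      (f := fun a n => ENNReal.ofReal (π0 x t a) * ∫⁻ r, Wn n (x, t, a, r) ∂κ x t a)
      fun a m n h => mul_le_mul_right (lintegral_mono fun r => hmono h _) _]
    refine Finset.sum_congr rfl fun a _ => ?_
    rw [← ENNReal.mul_iSup, ← lintegral_iSup (f := fun n r => Wn n (x, t, a, r))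
      (fun n => (hWn n).comp (measurable_slice x t a)) fun m n h r => hmono h _]
    simp_rw [hsup]
  have h1 : ∀ᵐ x ∂μx, ∀ n, AEMeasurable (lintegralLayer π0 κ (Wn n) x) μt :=
    ae_all_iff.2 fun n => (hbdd n).1
  have hx : ∀ᵐ x ∂μx, ∫⁻ t, lintegralLayer π0 κ W x t ∂μt
      = ⨆ n, ∫⁻ t, lintegralLayer π0 κ (Wn n) x t ∂μt := by
    filter_upwards [h1] with x hx
    rw [hlayer x]
    exact lintegral_iSup' hx (Eventually.of_forall fun t => hlmono x t)
  refine ⟨?_, (AEMeasurable.iSup fun n => (hbdd n).2.1).congr (hx.mono fun x h => h.symm), ?_⟩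
  · filter_upwards [h1] with x hx
    rw [hlayer x]
    exact AEMeasurable.iSup hx
  · rw [lintegral_congr_ae hx, lintegral_iSup' (fun n => (hbdd n).2.1)
      (Eventually.of_forall fun x m n h => lintegral_mono fun t => hlmono x t h)]
    simp_rw [← (hbdd _).2.2]
    rw [← lintegral_iSup hWn hmono]
    simp_rw [hsup]

lemma ae_ae_ae_of_ae (hD : IsDisintegration P μx μt π0 κ) {p : 𝒳 × 𝒯 × 𝒜 × ℛ → Prop}
    (h : ∀ᵐ z ∂P, p z) :
    ∀ᵐ x ∂μx, ∀ᵐ t ∂μt, ∀ a, 0 < π0 x t a → ∀ᵐ r ∂κ x t a, p (x, t, a, r) := by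
  obtain ⟨N, hpN, hN, hPN⟩ := exists_measurable_superset_of_null (ae_iff.1 h)
  obtain ⟨h1, h2, h3⟩ := hD.lintegral_eq (measurable_one.indicator hN)
  have h0 : ∫⁻ x, ∫⁻ t, lintegralLayer π0 κ (N.indicator 1) x t ∂μt ∂μx = 0 := by
    rw [← h3, lintegral_indicator_one hN, hPN]
  filter_upwards [(lintegral_eq_zero_iff' h2).1 h0, h1] with x hx hmx
  filter_upwards [(lintegral_eq_zero_iff' hmx).1 hx] with t ht a ha
  have hslice := lintegral_slice_eq_zero_of_lintegralLayer_eq_zero ht ha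
  rw [show (fun r => N.indicator 1 (x, t, a, r)) =
      ((fun r => (x, t, a, r)) ⁻¹' N).indicator 1 from rfl,
    lintegral_indicator_one (measurable_slice x t a hN)] at hslice
  exact measure_mono_null (fun r hr => hpN hr) hslice

lemma ae_ae_integrable_slice (hD : IsDisintegration P μx μt π0 κ) {G : 𝒳 × 𝒯 × 𝒜 × ℛ → ℝ}
    (hG : Integrable G P) : ∀ᵐ x ∂μx, ∀ᵐ t ∂μt, ∀ a, 0 < π0 x t a →
      Integrable (fun r => G (x, t, a, r)) (κ x t a) := by
  set G' := hG.1.mk G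
  have hG'm : Measurable G' := hG.1.stronglyMeasurable_mk.measurable
  obtain ⟨h1, h2, h3⟩ := hD.lintegral_eq (W := fun z => ‖G' z‖ₑ) hG'm.enorm
  have hfin : ∫⁻ x, ∫⁻ t, lintegralLayer π0 κ (fun z => ‖G' z‖ₑ) x t ∂μt ∂μx ≠ ∞ :=
    h3 ▸ (hG.congr hG.1.ae_eq_mk).2.ne
  filter_upwards [ae_lt_top' h2 hfin, h1, hD.ae_ae_ae_of_ae hG.1.ae_eq_mk] with x hx hmx heq
  filter_upwards [ae_lt_top' hmx hx.ne, heq] with t ht heqt a ha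
  exact Integrable.congr ⟨(hG'm.comp (measurable_slice x t a)).aestronglyMeasurable,
    lintegral_slice_lt_top_of_lintegralLayer_lt_top ht ha⟩ (EventuallyEq.symm (heqt a ha))

/-- Splitting `G = G⁺ - G⁻` turns `layer G x` into a difference of `toReal`s of a.e.-measurable
`lintegralLayer`s. -/
lemma ae_aestronglyMeasurable_layer (hD : IsDisintegration P μx μt π0 κ)
    {G : 𝒳 × 𝒯 × 𝒜 × ℛ → ℝ} (hG : Integrable G P) :
    ∀ᵐ x ∂μx, AEStronglyMeasurable (layer π0 κ G x) μt := by
  set G' := hG.1.mk G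
  have hG'm : Measurable G' := hG.1.stronglyMeasurable_mk.measurable
  obtain ⟨hp, -⟩ := hD.lintegral_eq (W := fun z => ENNReal.ofReal (G' z))
    hG'm.ennreal_ofReal
  obtain ⟨hn, -⟩ := hD.lintegral_eq (W := fun z => ENNReal.ofReal (-G' z))
    hG'm.neg.ennreal_ofReal
  filter_upwards [hp, hn, hD.ae_ae_integrable_slice hG, hD.ae_ae_ae_of_ae hG.1.ae_eq_mk]
    with x hpx hnx hix heqx
  refine (hpx.ennreal_toReal.sub hnx.ennreal_toReal).aestronglyMeasurable.congr ?_
  filter_upwards [hix, heqx] with t hit heqt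
  have hterm : ∀ a,
      ENNReal.ofReal (π0 x t a) * ∫⁻ r, ENNReal.ofReal (G' (x, t, a, r)) ∂κ x t a ≠ ∞ ∧
      ENNReal.ofReal (π0 x t a) * ∫⁻ r, ENNReal.ofReal (-G' (x, t, a, r)) ∂κ x t a ≠ ∞ ∧
      π0 x t a * ∫ r, G (x, t, a, r) ∂κ x t a =
        (ENNReal.ofReal (π0 x t a) * ∫⁻ r, ENNReal.ofReal (G' (x, t, a, r)) ∂κ x t a).toReal
          - (ENNReal.ofReal (π0 x t a) *
            ∫⁻ r, ENNReal.ofReal (-G' (x, t, a, r)) ∂κ x t a).toReal := by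
    intro a
    rcases (hD.nonneg x t a).eq_or_lt with h0 | hpos
    · simp [← h0]
    have hi : Integrable (fun r => G' (x, t, a, r)) (κ x t a) :=
      (hit a hpos).congr (heqt a hpos)
    refine ⟨ENNReal.mul_ne_top ENNReal.ofReal_ne_top hi.lintegral_lt_top.ne,
      ENNReal.mul_ne_top ENNReal.ofReal_ne_top hi.neg.lintegral_lt_top.ne, ?_⟩
    rw [integral_congr_ae (heqt a hpos),
      integral_eq_lintegral_pos_part_sub_lintegral_neg_part hi, ENNReal.toReal_mul,
      ENNReal.toReal_mul, ENNReal.toReal_ofReal hpos.le, mul_sub]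
  simp only [layer, lintegralLayer, Pi.sub_apply]
  rw [ENNReal.toReal_sum fun a _ => (hterm a).1, ENNReal.toReal_sum fun a _ => (hterm a).2.1,
    ← Finset.sum_sub_distrib]
  exact Finset.sum_congr rfl fun a _ => (hterm a).2.2.symm

end IsDisintegration

end Disintegration

lemma layer_opfv_eq {𝒳 𝒜 C : Type*} [Fintype 𝒜] [DecidableEq C]
    {π0 πe q fhat σ2 : 𝒳 → ℝ → 𝒜 → ℝ} {κ : 𝒳 → ℝ → 𝒜 → Measure ℝ} {φ : ℝ → C} {t' pφ : ℝ}
    {est : 𝒳 × ℝ × 𝒜 × ℝ → ℝ}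
    (hest : ∀ x t a r, est (x, t, a, r) =
      (if φ t = φ t' then (1 : ℝ) else 0) / pφ * (πe x t' a / π0 x t a)
          * (r - fhat x t a)
        + ∑ a', πe x t' a' * fhat x t' a')
    {x : 𝒳} {t : ℝ} (hπ0 : ∀ a, 0 ≤ π0 x t a) (hsum : ∑ a, π0 x t a = 1)
    (hκ : ∀ a, IsProbabilityMeasure (κ x t a)) (hq : ∀ a, ∫ r, r ∂κ x t a = q x t a)
    (hσ2 : ∀ a, σ2 x t a = ∫ r, (r - q x t a) ^ 2 ∂κ x t a)
    (hπe : ∀ a, 0 ≤ πe x t' a) (hsupp : ∀ a, 0 < πe x t' a → 0 < π0 x t a)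
    (hcpc : φ t = φ t' → ∀ a, q x t a - q x t' a = fhat x t a - fhat x t' a)
    (hint : ∀ a, 0 < π0 x t a → Integrable (fun r => est (x, t, a, r)) (κ x t a))
    (hint2 : ∀ a, 0 < π0 x t a → Integrable (fun r => est (x, t, a, r) ^ 2) (κ x t a)) :
    layer π0 κ est x t =
        (if φ t = φ t' then (1 : ℝ) else 0) / pφ * ∑ a, πe x t' a * (q x t' a - fhat x t' a)
          + ∑ a', πe x t' a' * fhat x t' a' ∧
      layer π0 κ (fun z => est z ^ 2) x t =
        ∑ a, π0 x t a * (((if φ t = φ t' then (1 : ℝ) else 0) / pφ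
            * (πe x t' a / π0 x t a)) ^ 2 * σ2 x t a)
          + ((if φ t = φ t' then (1 : ℝ) else 0) / pφ) ^ 2 *
            ((∑ a, π0 x t a
                * ((πe x t' a / π0 x t a) * (q x t' a - fhat x t' a)) ^ 2)
              - (∑ a, π0 x t a
                  * ((πe x t' a / π0 x t a) * (q x t' a - fhat x t' a))) ^ 2)
          + ((if φ t = φ t' then (1 : ℝ) else 0) / pφ
              * ∑ a, πe x t' a * (q x t' a - fhat x t' a)) ^ 2
          + 2 * ((if φ t = φ t' then (1 : ℝ) else 0) / pφ
              * ∑ a, πe x t' a * (q x t' a - fhat x t' a)) * ∑ a', πe x t' a' * fhat x t' a'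
          + (∑ a', πe x t' a' * fhat x t' a') ^ 2 := by
  set I := (if φ t = φ t' then (1 : ℝ) else 0) / pφ
  set F := ∑ a', πe x t' a' * fhat x t' a'
  have hπe0 : ∀ a, π0 x t a = 0 → πe x t' a = 0 := fun a h0 =>
    (not_lt.1 fun hpos => (hsupp a hpos).ne' h0).antisymm (hπe a)
  have hw : ∀ a, π0 x t a * (πe x t' a / π0 x t a) = πe x t' a := fun a => by
    rcases eq_or_ne (π0 x t a) 0 with h0 | h0
    · simp [h0, hπe0 a h0]
    · field_simp
  -- `I` vanishes off the time-feature class of `t'`, where pairwise correctness applies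
  have hΔ : ∀ a, I * (q x t a - fhat x t a) = I * (q x t' a - fhat x t' a) := fun a => by
    by_cases hφ : φ t = φ t'
    · rw [show q x t a - fhat x t a = q x t' a - fhat x t' a by linarith [hcpc hφ a]]
    · simp [I, hφ]
  have hslice : ∀ a, 0 < π0 x t a →
      ∫ r, est (x, t, a, r) ∂κ x t a = I * (πe x t' a / π0 x t a) * (q x t a - fhat x t a) + F ∧
      ∫ r, est (x, t, a, r) ^ 2 ∂κ x t a = (I * (πe x t' a / π0 x t a)) ^ 2 * σ2 x t a
        + (I * (πe x t' a / π0 x t a) * (q x t a - fhat x t a) + F) ^ 2 := fun a ha => by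
    have := hκ a
    simp only [hest] at hint hint2 ⊢
    exact integral_affine_moments (hq a) (hσ2 a) (hint a ha) (hint2 a ha)
  have hterm1 : ∀ a, π0 x t a * ∫ r, est (x, t, a, r) ∂κ x t a
      = I * (πe x t' a * (q x t' a - fhat x t' a)) + π0 x t a * F := fun a => by
    rcases (hπ0 a).eq_or_lt with h0 | ha
    · simp [← h0, hπe0 a h0.symm]
    · rw [(hslice a ha).1, mul_right_comm I, hΔ a]
      linear_combination I * (q x t' a - fhat x t' a) * hw a
  have hterm2 : ∀ a, π0 x t a * ∫ r, est (x, t, a, r) ^ 2 ∂κ x t a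
      = π0 x t a * ((I * (πe x t' a / π0 x t a)) ^ 2 * σ2 x t a)
        + I ^ 2 * (π0 x t a * ((πe x t' a / π0 x t a) * (q x t' a - fhat x t' a)) ^ 2)
        + 2 * I * F * (π0 x t a * ((πe x t' a / π0 x t a) * (q x t' a - fhat x t' a)))
        + π0 x t a * F ^ 2 := fun a => by
    rcases (hπ0 a).eq_or_lt with h0 | ha
    · simp [← h0]
    · rw [(hslice a ha).2, mul_right_comm I, hΔ a]
      ring
  have hS : ∑ a, π0 x t a * ((πe x t' a / π0 x t a) * (q x t' a - fhat x t' a))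
      = ∑ a, πe x t' a * (q x t' a - fhat x t' a) :=
    Finset.sum_congr rfl fun a _ => by rw [← mul_assoc, hw a]
  constructor
  · simp only [layer, hterm1, Finset.sum_add_distrib, ← Finset.mul_sum, ← Finset.sum_mul, hsum,
      one_mul]
  · simp only [layer, hterm2, Finset.sum_add_distrib, ← Finset.mul_sum, ← Finset.sum_mul, hsum,
      one_mul, hS]
    ring

theorem opfv_variance_general
    {𝒳 : Type*} [MeasurableSpace 𝒳] {𝒜 : Type*} [Fintype 𝒜] [MeasurableSpace 𝒜]
    {C : Type*} [DecidableEq C]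
    -- time horizon of the logged data
    (T : ℝ)
    -- stationary context distribution p(x) and time distribution p(t), supported on [0,T]
    (μx : Measure 𝒳) [IsProbabilityMeasure μx]
    (μt : Measure ℝ) [IsProbabilityMeasure μt]
    (hμtsupp : μt (Set.Icc 0 T) = 1)
    -- logging policy, evaluation policy, expected reward, regression model
    (π0 πe q fhat : 𝒳 → ℝ → 𝒜 → ℝ)
    (hπ0nonneg : ∀ x t a, 0 ≤ π0 x t a) (hπ0sum : ∀ x t, ∑ a, π0 x t a = 1)
    (hπenonneg : ∀ x t a, 0 ≤ πe x t a)
    -- reward distributions with conditional mean q and conditional variance σ²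
    (κ : 𝒳 → ℝ → 𝒜 → Measure ℝ) (hκ : ∀ x t a, IsProbabilityMeasure (κ x t a))
    (hq : ∀ x t a, ∫ r, r ∂(κ x t a) = q x t a)
    (σ2 : 𝒳 → ℝ → 𝒜 → ℝ)
    (hσ2 : ∀ x t a, σ2 x t a = ∫ r, (r - q x t a) ^ 2 ∂(κ x t a))
    -- time feature function and target time
    (φ : ℝ → C) (t' : ℝ)
    -- marginal probability of the target time feature, p(φ(t'))
    (pφ : ℝ) (hpφdef : pφ = (μt ({s | φ s = φ t'} ∩ Set.Icc 0 T)).toReal)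
    -- Common Time Feature Support
    (hpφpos : 0 < pφ)
    -- Common Support
    (hcommon : ∀ x a, ∀ t ∈ Set.Icc 0 T, 0 < πe x t' a → 0 < π0 x t a)
    -- Conditional Pairwise Correctness
    (hCPC : ∀ x a, ∀ t ∈ Set.Icc 0 T, φ t = φ t' →
      q x t a - q x t' a = fhat x t a - fhat x t' a)
    -- logged data: n i.i.d. draws from P, the joint law of (x, t, a, r)
    (n : ℕ) (hn : 0 < n)
    (P : Measure (𝒳 × ℝ × 𝒜 × ℝ)) [IsProbabilityMeasure P]
    (hP : ∀ g : 𝒳 × ℝ × 𝒜 × ℝ → ℝ, Integrable g P →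
      ∫ z, g z ∂P
        = ∫ x, (∫ t, (∑ a, π0 x t a * (∫ r, g (x, t, a, r) ∂(κ x t a))) ∂μt) ∂μx)
    -- per-sample term of the OPFV estimator
    (est : 𝒳 × ℝ × 𝒜 × ℝ → ℝ)
    (hest : ∀ x t a r, est (x, t, a, r) =
      (if φ t = φ t' then (1 : ℝ) else 0) / pφ * (πe x t' a / π0 x t a)
          * (r - fhat x t a)
        + ∑ a', πe x t' a' * fhat x t' a')
    -- integrability / square-integrability (all quantities are assumed well-defined)
    (hInt : Integrable est P)
    (hInt2 : Integrable (fun z => est z ^ 2) P)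
    (hVInt2 : Integrable (fun x => (∑ a, πe x t' a * q x t' a) ^ 2) μx)
    (hΔInt2 : Integrable (fun x => (∑ a, πe x t' a * (q x t' a - fhat x t' a)) ^ 2) μx)
    (hAInt : Integrable (fun p : 𝒳 × ℝ =>
      ∑ a, π0 p.1 p.2 a * (((if φ p.2 = φ t' then (1 : ℝ) else 0) / pφ
        * (πe p.1 t' a / π0 p.1 p.2 a)) ^ 2 * σ2 p.1 p.2 a)) (μx.prod μt))
    (hBInt : Integrable (fun p : 𝒳 × ℝ =>
      ((if φ p.2 = φ t' then (1 : ℝ) else 0) / pφ) ^ 2 *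
        ((∑ a, π0 p.1 p.2 a
            * ((πe p.1 t' a / π0 p.1 p.2 a) * (q p.1 t' a - fhat p.1 t' a)) ^ 2)
          - (∑ a, π0 p.1 p.2 a
              * ((πe p.1 t' a / π0 p.1 p.2 a) * (q p.1 t' a - fhat p.1 t' a))) ^ 2))
      (μx.prod μt)) :
    -- n · Var[V̂^OPFV] equals the four-term decomposition
    (n : ℝ) * (∫ D : Fin n → 𝒳 × ℝ × 𝒜 × ℝ,
        ((n : ℝ)⁻¹ * ∑ i, est (D i)
          - ∫ D' : Fin n → 𝒳 × ℝ × 𝒜 × ℝ, (n : ℝ)⁻¹ * ∑ i, est (D' i)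
              ∂(Measure.pi fun _ => P)) ^ 2
        ∂(Measure.pi fun _ => P))
    = -- (1) E_{p(x,t) π₀(a|x,t)}[ ((𝕀_φ/pφ) (πe/π₀))² σ²(x,t,a) ]
      (∫ x, (∫ t, (∑ a, π0 x t a * (((if φ t = φ t' then (1 : ℝ) else 0) / pφ
          * (πe x t' a / π0 x t a)) ^ 2 * σ2 x t a)) ∂μt) ∂μx)
      -- (2) E_{p(x,t)}[ (𝕀_φ/pφ)² · Var_{π₀(a|x,t)}[ (πe/π₀) Δ_{q,f̂}(x,t',a) ] ]
      + (∫ x, (∫ t, ((if φ t = φ t' then (1 : ℝ) else 0) / pφ) ^ 2 *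
            ((∑ a, π0 x t a
                * ((πe x t' a / π0 x t a) * (q x t' a - fhat x t' a)) ^ 2)
              - (∑ a, π0 x t a
                  * ((πe x t' a / π0 x t a) * (q x t' a - fhat x t' a))) ^ 2) ∂μt) ∂μx)
      -- (3) Var_{p(t)}[𝕀_φ/pφ] · E_{p(x)}[ (E_{πe(a|x,t')}[Δ_{q,f̂}(x,t',a)])² ]
      + ((∫ t, ((if φ t = φ t' then (1 : ℝ) else 0) / pφ) ^ 2 ∂μt)
          - (∫ t, (if φ t = φ t' then (1 : ℝ) else 0) / pφ ∂μt) ^ 2)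
        * (∫ x, (∑ a, πe x t' a * (q x t' a - fhat x t' a)) ^ 2 ∂μx)
      -- (4) Var_{p(x)}[ E_{πe(a|x,t')}[q(x,t',a)] ]
      + ((∫ x, (∑ a, πe x t' a * q x t' a) ^ 2 ∂μx)
          - (∫ x, ∑ a, πe x t' a * q x t' a ∂μx) ^ 2) := by
  have hD : IsDisintegration P μx μt π0 κ := ⟨hπ0nonneg, hπ0sum, hκ, hP⟩
  have hIcc : ∀ᵐ t ∂μt, t ∈ Set.Icc 0 T :=
    mem_ae_iff.2 ((prob_compl_eq_zero_iff measurableSet_Icc).2 hμtsupp)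
  have hL := ((hD.ae_ae_integrable_slice hInt).and (hD.ae_ae_integrable_slice hInt2)).mono
    fun x hx => ((hx.1.and hx.2).and hIcc).mono fun t ht =>
      layer_opfv_eq hest (hπ0nonneg x t) (hπ0sum x t) (hκ x t) (hq x t) (hσ2 x t)
        (hπenonneg x t') (hcommon x · t ht.2) (fun hφ a => hCPC x a t ht.2 hφ) ht.1.1 ht.1.2
  have hIS : ∀ᵐ x ∂μx, AEStronglyMeasurable (fun t => (if φ t = φ t' then (1 : ℝ) else 0) / pφ
      * ∑ a, πe x t' a * (q x t' a - fhat x t' a)) μt := by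
    filter_upwards [hD.ae_aestronglyMeasurable_layer hInt, hL] with x hm hx
    exact (AEStronglyMeasurable.sub (hm.congr (hx.mono fun t ht => ht.1))
      aestronglyMeasurable_const).congr (Eventually.of_forall fun t => add_sub_cancel_right _ _)
  have hI : ∀ t, |(if φ t = φ t' then (1 : ℝ) else 0) / pφ| ≤ 1 / pφ := fun t => by
    split_ifs <;> simp [abs_of_pos hpφpos, hpφpos.le]
  have hI1 := integral_ite_div_eq_one measurableSet_Icc hμtsupp hpφdef hpφpos
  have hSF : ∀ x, ∑ a, πe x t' a * (q x t' a - fhat x t' a) + ∑ a', πe x t' a' * fhat x t' a'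
      = ∑ a, πe x t' a * q x t' a := fun x => by
    simp [mul_sub]
  rw [natCast_mul_variance_sampleMean ((memLp_two_iff_integrable_sq hInt.1).2 hInt2) hn.ne',
    hD.integral_eq _ hInt, hD.integral_eq _ hInt2,
    integral_integral_of_ae_eq_mul_add hI hI1 hIS hSF
      (hL.mono fun x hx => hx.mono fun t ht => ht.1),
    integral_integral_of_ae_eq_sq hI hI1 hIS hAInt hBInt hΔInt2 hVInt2 hSF
      (hL.mono fun x hx => hx.mono fun t ht => ht.2)]
  linear_combination sq_integral_mul_integral_sq hI1 hIS

/-- **Variance of the OPFV estimator (Proposition 3.4).**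
Under Common Support, Common Time Feature Support, Conditional Pairwise Correctness and a
stationary context distribution (modeled as the product `μx.prod μt`),
`n · Var[V̂^OPFV_{t'}(π_e;𝒟)]` decomposes into the four terms of Proposition 3.4. -/
theorem opfv_variance
    {𝒳 : Type*} [MeasurableSpace 𝒳] {𝒜 : Type*} [Fintype 𝒜] [MeasurableSpace 𝒜]
    {C : Type*} [DecidableEq C]
    -- time horizon of the logged data
    (T : ℝ) (hT : 0 < T)
    -- stationary context distribution p(x) and time distribution p(t), supported on [0,T]
    (μx : Measure 𝒳) [IsProbabilityMeasure μx]
    (μt : Measure ℝ) [IsProbabilityMeasure μt]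
    (hμtsupp : μt (Set.Icc 0 T) = 1)
    -- logging policy, evaluation policy, expected reward, regression model
    (π0 πe q fhat : 𝒳 → ℝ → 𝒜 → ℝ)
    (hπ0nonneg : ∀ x t a, 0 ≤ π0 x t a) (hπ0sum : ∀ x t, ∑ a, π0 x t a = 1)
    (hπenonneg : ∀ x t a, 0 ≤ πe x t a) (hπesum : ∀ x t, ∑ a, πe x t a = 1)
    -- reward distributions with conditional mean q and conditional variance σ²
    (κ : 𝒳 → ℝ → 𝒜 → Measure ℝ) (hκ : ∀ x t a, IsProbabilityMeasure (κ x t a))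
    (hq : ∀ x t a, ∫ r, r ∂(κ x t a) = q x t a)
    (σ2 : 𝒳 → ℝ → 𝒜 → ℝ)
    (hσ2 : ∀ x t a, σ2 x t a = ∫ r, (r - q x t a) ^ 2 ∂(κ x t a))
    -- time feature function and target time
    (φ : ℝ → C) (t' : ℝ) (ht' : T < t')
    -- marginal probability of the target time feature, p(φ(t'))
    (pφ : ℝ) (hpφdef : pφ = (μt ({s | φ s = φ t'} ∩ Set.Icc 0 T)).toReal)
    -- Common Time Feature Support
    (hpφpos : 0 < pφ)
    -- Common Support
    (hcommon : ∀ x a, ∀ t ∈ Set.Icc 0 T, 0 < πe x t' a → 0 < π0 x t a)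
    -- Conditional Pairwise Correctness
    (hCPC : ∀ x a, ∀ t ∈ Set.Icc 0 T, φ t = φ t' →
      q x t a - q x t' a = fhat x t a - fhat x t' a)
    -- logged data: n i.i.d. draws from P, the joint law of (x, t, a, r)
    (n : ℕ) (hn : 0 < n)
    (P : Measure (𝒳 × ℝ × 𝒜 × ℝ)) [IsProbabilityMeasure P]
    (hP : ∀ g : 𝒳 × ℝ × 𝒜 × ℝ → ℝ, Integrable g P →
      ∫ z, g z ∂P
        = ∫ x, (∫ t, (∑ a, π0 x t a * (∫ r, g (x, t, a, r) ∂(κ x t a))) ∂μt) ∂μx)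
    -- per-sample term of the OPFV estimator
    (est : 𝒳 × ℝ × 𝒜 × ℝ → ℝ)
    (hest : ∀ x t a r, est (x, t, a, r) =
      (if φ t = φ t' then (1 : ℝ) else 0) / pφ * (πe x t' a / π0 x t a)
          * (r - fhat x t a)
        + ∑ a', πe x t' a' * fhat x t' a')
    -- integrability / square-integrability (all quantities are assumed well-defined)
    (hInt : Integrable est P)
    (hInt2 : Integrable (fun z => est z ^ 2) P)
    (hVInt : Integrable (fun x => ∑ a, πe x t' a * q x t' a) μx)
    (hVInt2 : Integrable (fun x => (∑ a, πe x t' a * q x t' a) ^ 2) μx)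
    (hΔInt2 : Integrable (fun x => (∑ a, πe x t' a * (q x t' a - fhat x t' a)) ^ 2) μx)
    (hAInt : Integrable (fun p : 𝒳 × ℝ =>
      ∑ a, π0 p.1 p.2 a * (((if φ p.2 = φ t' then (1 : ℝ) else 0) / pφ
        * (πe p.1 t' a / π0 p.1 p.2 a)) ^ 2 * σ2 p.1 p.2 a)) (μx.prod μt))
    (hBInt : Integrable (fun p : 𝒳 × ℝ =>
      ((if φ p.2 = φ t' then (1 : ℝ) else 0) / pφ) ^ 2 *
        ((∑ a, π0 p.1 p.2 a
            * ((πe p.1 t' a / π0 p.1 p.2 a) * (q p.1 t' a - fhat p.1 t' a)) ^ 2)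
          - (∑ a, π0 p.1 p.2 a
              * ((πe p.1 t' a / π0 p.1 p.2 a) * (q p.1 t' a - fhat p.1 t' a))) ^ 2))
      (μx.prod μt)) :
    -- n · Var[V̂^OPFV] equals the four-term decomposition
    (n : ℝ) * (∫ D : Fin n → 𝒳 × ℝ × 𝒜 × ℝ,
        ((n : ℝ)⁻¹ * ∑ i, est (D i)
          - ∫ D' : Fin n → 𝒳 × ℝ × 𝒜 × ℝ, (n : ℝ)⁻¹ * ∑ i, est (D' i)
              ∂(Measure.pi fun _ => P)) ^ 2
        ∂(Measure.pi fun _ => P))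
    = -- (1) E_{p(x,t) π₀(a|x,t)}[ ((𝕀_φ/pφ) (πe/π₀))² σ²(x,t,a) ]
      (∫ x, (∫ t, (∑ a, π0 x t a * (((if φ t = φ t' then (1 : ℝ) else 0) / pφ
          * (πe x t' a / π0 x t a)) ^ 2 * σ2 x t a)) ∂μt) ∂μx)
      -- (2) E_{p(x,t)}[ (𝕀_φ/pφ)² · Var_{π₀(a|x,t)}[ (πe/π₀) Δ_{q,f̂}(x,t',a) ] ]
      + (∫ x, (∫ t, ((if φ t = φ t' then (1 : ℝ) else 0) / pφ) ^ 2 *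
            ((∑ a, π0 x t a
                * ((πe x t' a / π0 x t a) * (q x t' a - fhat x t' a)) ^ 2)
              - (∑ a, π0 x t a
                  * ((πe x t' a / π0 x t a) * (q x t' a - fhat x t' a))) ^ 2) ∂μt) ∂μx)
      -- (3) Var_{p(t)}[𝕀_φ/pφ] · E_{p(x)}[ (E_{πe(a|x,t')}[Δ_{q,f̂}(x,t',a)])² ]
      + ((∫ t, ((if φ t = φ t' then (1 : ℝ) else 0) / pφ) ^ 2 ∂μt)
          - (∫ t, (if φ t = φ t' then (1 : ℝ) else 0) / pφ ∂μt) ^ 2)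
        * (∫ x, (∑ a, πe x t' a * (q x t' a - fhat x t' a)) ^ 2 ∂μx)
      -- (4) Var_{p(x)}[ E_{πe(a|x,t')}[q(x,t',a)] ]
      + ((∫ x, (∑ a, πe x t' a * q x t' a) ^ 2 ∂μx)
          - (∫ x, ∑ a, πe x t' a * q x t' a ∂μx) ^ 2) :=
  opfv_variance_general T μx μt hμtsupp π0 πe q fhat hπ0nonneg hπ0sum hπenonneg κ hκ hq σ2 hσ2 φ t'
    pφ hpφdef hpφpos hcommon hCPC n hn P hP est hest hInt hInt2 hVInt2 hΔInt2 hAInt hBInt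
end

section
/- Time-feature importance weighting identity (key lemma underlying the OPFV analysis): Assume Common Support, Common Time Feature Support, and the stationary-context assumption. Then for any bounded measurable function ψ : 𝒳 × 𝒜 → ℝ, E_{p(x) p(t) π₀(a|x,t)}[ (𝕀_φ(t,t')/p(φ(t'))) · (π_e(a|x,t')/π₀(a|x,t)) · ψ(x,a) ] = E_{p(x) π_e(a|x,t')}[ ψ(x,a) ]; i.e., the composite importance weight over the time feature and the action simultaneously corrects both the action distribution (from π₀ to π_e) and the time distribution (to mass 1 on the target time feature). -/
open MeasureTheory

/-! On the support `[0, T]` of the time distribution, Common Support lets the action weight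
`π_e / π₀` cancel against `π₀` (actions with `π_e = 0` contribute nothing), so the integrand
reduces to `𝕀{φ t = φ t'} / p(φ(t')) · E_{π_e}[ψ(x, ·)]`. Integrating the indicator in `t` gives
`p(φ(t'))`, which cancels the normalisation. Since `φ` is not assumed measurable, the set
`{φ t = φ t'}` is only known to be null-measurable, through the integrability of the slices. -/

theorem Finset.sum_mul_importance_weight {ι K : Type*} [Fintype ι] [Field K]
    (p q f : ι → K) (c : K) (hpq : ∀ i, p i = 0 → q i = 0) :
    ∑ i, p i * (c * (q i / p i) * f i) = c * ∑ i, q i * f i := by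
  rw [Finset.mul_sum]
  refine Finset.sum_congr rfl fun i _ => ?_
  calc p i * (c * (q i / p i) * f i) = c * (p i * (q i / p i)) * f i := by ring
    _ = c * (q i * f i) := by rw [mul_div_cancel_of_imp' (hpq i), mul_assoc]

theorem MeasureTheory.integral_indicator_const_of_aemeasurable {α : Type*} [MeasurableSpace α]
    {μ : Measure α} {s : Set α} (c : ℝ) (hs : AEMeasurable (s.indicator fun _ => c) μ) :
    ∫ x, s.indicator (fun _ => c) x ∂μ = μ.real s * c := by
  rcases eq_or_ne c 0 with rfl | hc
  · simp
  · have : NeZero c := ⟨hc⟩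
    rw [integral_indicator₀ ((aemeasurable_indicator_const_iff c).1 hs), setIntegral_const,
      smul_eq_mul]

theorem opfv_weighting_identity_general
    {𝒳 : Type*} [MeasurableSpace 𝒳] {𝒜 : Type*} [Fintype 𝒜]
    {C : Type*} [DecidableEq C]
    -- time horizon of the logged data
    (T : ℝ)
    -- stationary context distribution p(x) and time distribution p(t), supported on [0,T]
    (μx : Measure 𝒳) [IsProbabilityMeasure μx]
    (μt : Measure ℝ) [IsProbabilityMeasure μt]
    (hμtsupp : μt (Set.Icc 0 T) = 1)
    -- logging policy and evaluation policy
    (π0 πe : 𝒳 → ℝ → 𝒜 → ℝ)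
    (hπenonneg : ∀ x t a, 0 ≤ πe x t a)
    -- time feature function and target time
    (φ : ℝ → C) (t' : ℝ)
    -- marginal probability of the target time feature, p(φ(t'))
    (pφ : ℝ) (hpφdef : pφ = (μt ({s | φ s = φ t'} ∩ Set.Icc 0 T)).toReal)
    -- Common Time Feature Support
    (hpφpos : 0 < pφ)
    -- Common Support
    (hcommon : ∀ x a, ∀ t ∈ Set.Icc 0 T, 0 < πe x t' a → 0 < π0 x t a)
    -- a bounded measurable test function ψ
    (ψ : 𝒳 → 𝒜 → ℝ)
    -- integrability (all expectations are assumed well-defined)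
    (hLInt : Integrable (fun p : 𝒳 × ℝ =>
      ∑ a, π0 p.1 p.2 a * ((if φ p.2 = φ t' then (1 : ℝ) else 0) / pφ
        * (πe p.1 t' a / π0 p.1 p.2 a) * ψ p.1 a)) (μx.prod μt)) :
    -- the composite weight corrects both the action and the time distributions
    ∫ x, (∫ t, (∑ a, π0 x t a * ((if φ t = φ t' then (1 : ℝ) else 0) / pφ
        * (πe x t' a / π0 x t a) * ψ x a)) ∂μt) ∂μx
      = ∫ x, ∑ a, πe x t' a * ψ x a ∂μx := by
  set A := {s | φ s = φ t'} ∩ Set.Icc 0 T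
  have hsupp : ∀ᵐ t ∂μt, t ∈ Set.Icc 0 T :=
    (ae_iff_measure_eq measurableSet_Icc.nullMeasurableSet).2 (hμtsupp.trans measure_univ.symm)
  have hreduce : ∀ x, ∀ t ∈ Set.Icc 0 T,
      ∑ a, π0 x t a * ((if φ t = φ t' then (1 : ℝ) else 0) / pφ
        * (πe x t' a / π0 x t a) * ψ x a)
        = A.indicator (fun _ => (∑ a, πe x t' a * ψ x a) / pφ) t := by
    intro x t ht
    have hpq : ∀ a, π0 x t a = 0 → πe x t' a = 0 := fun a h0 =>
      ((hπenonneg x t' a).eq_or_lt.resolve_right fun hpos => (hcommon x a t ht hpos).ne' h0).symm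
    rw [Finset.sum_mul_importance_weight _ _ _ _ hpq]
    by_cases hφ : φ t = φ t'
    · rw [Set.indicator_of_mem (show t ∈ A from ⟨hφ, ht⟩), if_pos hφ]
      ring
    · rw [Set.indicator_of_notMem fun h => hφ h.1, if_neg hφ, zero_div, zero_mul]
  refine integral_congr_ae ?_
  filter_upwards [hLInt.prod_right_ae] with x hx
  have hslice := hsupp.mono fun t ht => hreduce x t ht
  rw [integral_congr_ae hslice, integral_indicator_const_of_aemeasurable _
    ((hx.congr hslice).aestronglyMeasurable.aemeasurable), measureReal_def, ← hpφdef]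
  field_simp

/-- **Time-feature importance weighting identity.**
Under Common Support, Common Time Feature Support and a stationary context distribution,
for any bounded measurable `ψ : 𝒳 × 𝒜 → ℝ`,
`E_{p(x) p(t) π₀(a|x,t)}[ (𝕀_φ(t,t')/p(φ(t'))) (π_e(a|x,t')/π₀(a|x,t)) ψ(x,a) ]
  = E_{p(x) π_e(a|x,t')}[ ψ(x,a) ]`. -/
theorem opfv_weighting_identity
    {𝒳 : Type*} [MeasurableSpace 𝒳] {𝒜 : Type*} [Fintype 𝒜]
    {C : Type*} [DecidableEq C]
    -- time horizon of the logged data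
    (T : ℝ) (hT : 0 < T)
    -- stationary context distribution p(x) and time distribution p(t), supported on [0,T]
    (μx : Measure 𝒳) [IsProbabilityMeasure μx]
    (μt : Measure ℝ) [IsProbabilityMeasure μt]
    (hμtsupp : μt (Set.Icc 0 T) = 1)
    -- logging policy and evaluation policy
    (π0 πe : 𝒳 → ℝ → 𝒜 → ℝ)
    (hπ0nonneg : ∀ x t a, 0 ≤ π0 x t a) (hπ0sum : ∀ x t, ∑ a, π0 x t a = 1)
    (hπenonneg : ∀ x t a, 0 ≤ πe x t a) (hπesum : ∀ x t, ∑ a, πe x t a = 1)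
    -- time feature function and target time
    (φ : ℝ → C) (t' : ℝ) (ht' : T < t')
    -- marginal probability of the target time feature, p(φ(t'))
    (pφ : ℝ) (hpφdef : pφ = (μt ({s | φ s = φ t'} ∩ Set.Icc 0 T)).toReal)
    -- Common Time Feature Support
    (hpφpos : 0 < pφ)
    -- Common Support
    (hcommon : ∀ x a, ∀ t ∈ Set.Icc 0 T, 0 < πe x t' a → 0 < π0 x t a)
    -- a bounded measurable test function ψ
    (ψ : 𝒳 → 𝒜 → ℝ)
    (hψmeas : ∀ a, Measurable fun x => ψ x a)
    (hψbdd : ∃ M : ℝ, ∀ x a, |ψ x a| ≤ M)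
    -- measurability of the policies (so that the integrals are well-defined)
    (hπ0meas : ∀ a, Measurable fun p : 𝒳 × ℝ => π0 p.1 p.2 a)
    (hπemeas : ∀ a, Measurable fun x => πe x t' a)
    -- integrability (all expectations are assumed well-defined)
    (hLInt : Integrable (fun p : 𝒳 × ℝ =>
      ∑ a, π0 p.1 p.2 a * ((if φ p.2 = φ t' then (1 : ℝ) else 0) / pφ
        * (πe p.1 t' a / π0 p.1 p.2 a) * ψ p.1 a)) (μx.prod μt)) :
    -- the composite weight corrects both the action and the time distributions
    ∫ x, (∫ t, (∑ a, π0 x t a * ((if φ t = φ t' then (1 : ℝ) else 0) / pφ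
        * (πe x t' a / π0 x t a) * ψ x a)) ∂μt) ∂μx
      = ∫ x, ∑ a, πe x t' a * ψ x a ∂μx :=
  opfv_weighting_identity_general T μx μt hμtsupp π0 πe hπenonneg φ t' pφ hpφdef hpφpos hcommon ψ
    hLInt
end

section
/- Unbiasedness of the gradient of the OPFV estimator (Proposition D.2): Assume Full Support, Common Time Feature Support, Conditional Pairwise Correctness, and the stationary-context assumption. Then E_𝒟[∇_ζ V̂^{OPFV}_{t'}(π_ζ;𝒟)] = E_{p(x|t') π_ζ(a|x,t')}[ q(x,t',a) s_ζ(x,t',a) ] = ∇_ζ V_{t'}(π_ζ). -/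
/-!
Averaging over the i.i.d. sample reduces the claim to `∫ est ∂P`, which `hP` writes as an
iterated integral. At a time `t` in the support of `μt`, full support lets the importance weight
`π_ζ / π₀` cancel the logging propensity, and conditional pairwise correctness replaces
`q - f̂` at `t` by `q - f̂` at `t'` whenever `φ t = φ t'`. So the inner expectation is
`B x + 𝟙{φ t = φ t'} W x / p(φ(t'))` with `B x + W x = Σₐ π_ζ q s`, and integrating over `t`
against `μt {φ · = φ t'} = p(φ(t'))` gives the result.

Since `hP` only identifies integrals against `P`, the inner Bochner integrals could a priori be
junk values of non-integrable slices. Applying `hP` to `est + θ ∘ Prod.fst` shows that shifting by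
`θ x` adds `θ x` times the mass of integrable reward slices; for constant and two-valued `θ` this
pins the shifted inner integrals to slope `1` in the shift, which forces that mass to be `1`
almost everywhere.
-/

open MeasureTheory

lemma integral_sampleMean_pi {ι Ω : Type*} [Fintype ι] [Nonempty ι] [MeasurableSpace Ω]
    {P : Measure Ω} [IsProbabilityMeasure P] {f : Ω → ℝ} (hf : Integrable f P) :
    ∫ D : ι → Ω, (Fintype.card ι : ℝ)⁻¹ * ∑ i, f (D i) ∂(Measure.pi fun _ => P)
      = ∫ z, f z ∂P := by
  have hmap (i : ι) := measurePreserving_eval (fun _ => P) i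
  have hcoord (i : ι) : Integrable (fun D : ι → Ω => f (D i)) (Measure.pi fun _ => P) :=
    ((hmap i).integrable_comp hf.aestronglyMeasurable).2 hf
  have hcoord_integral (i : ι) :
      ∫ D : ι → Ω, f (D i) ∂(Measure.pi fun _ => P) = ∫ z, f z ∂P := by
    have h := integral_map (hmap i).measurable.aemeasurable
      ((hmap i).map_eq ▸ hf.aestronglyMeasurable)
    rwa [(hmap i).map_eq, eq_comm] at h
  rw [integral_const_mul, integral_finsetSum _ fun i _ => hcoord i]
  simp only [hcoord_integral, Finset.sum_const, Finset.card_univ, nsmul_eq_mul]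
  field_simp

open Classical in
lemma integral_add_const_eq_ite {R : Type*} [MeasurableSpace R] {κ : Measure R}
    [IsProbabilityMeasure κ] (f : R → ℝ) (c : ℝ) :
    ∫ r, (f r + c) ∂κ = ∫ r, f r ∂κ + c * if Integrable f κ then 1 else 0 := by
  split_ifs with hf
  · simp [integral_add hf (integrable_const c)]
  · have hfc : ¬ Integrable (fun r => f r + c) κ := fun h => hf (integrable_add_const_iff.1 h)
    simp [integral_undef hf, integral_undef hfc]

lemma integral_mul_add_of_integrable {R : Type*} [MeasurableSpace R] {κ : Measure R}
    [IsProbabilityMeasure κ] {f : R → ℝ} {α γ : ℝ} (h : Integrable (fun r => α * f r + γ) κ) :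
    ∫ r, (α * f r + γ) ∂κ = α * ∫ r, f r ∂κ + γ := by
  simp [integral_add (integrable_add_const_iff.1 h) (integrable_const γ), integral_const_mul]

lemma integral_indicator_const_of_integrable {Y : Type*} [MeasurableSpace Y] {μ : Measure Y}
    {S : Set Y} {c : ℝ} (h : Integrable (S.indicator fun _ => c) μ) :
    ∫ t, S.indicator (fun _ => c) t ∂μ = μ.real S * c := by
  rcases eq_or_ne c 0 with rfl | hc
  · simp
  -- `S` need not be measurable, but integrability of its indicator makes it null measurable
  have hS : NullMeasurableSet S μ := by
    have hpre : (S.indicator fun _ => c) ⁻¹' {c} = S := by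
      ext t
      by_cases ht : t ∈ S <;> simp [ht, hc.symm]
    exact hpre ▸ h.aemeasurable.nullMeasurableSet_preimage (measurableSet_singleton c)
  rw [integral_indicator₀ hS, setIntegral_const, smul_eq_mul]

lemma ae_eq_add_of_integral_comp_eq {X : Type*} [MeasurableSpace X] {μ : Measure X}
    [IsProbabilityMeasure μ] {F : ℝ → X → ℝ} {K : ℝ}
    (hF : ∀ θ : X → ℝ, Integrable θ μ → ∫ x, F (θ x) x ∂μ = K + ∫ x, θ x ∂μ)
    {c c' : ℝ} (hc : K + c ≠ 0) (hc' : K + c' ≠ 0) :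
    F c' =ᵐ[μ] fun x => F c x + (c' - c) := by
  classical
  have hconst (c : ℝ) : ∫ x, F c x ∂μ = K + c := by
    simpa using hF (fun _ => c) (integrable_const c)
  have hint (c : ℝ) (hc : K + c ≠ 0) : Integrable (F c) μ := by
    by_contra h
    exact hc (by rw [← hconst, integral_undef h])
  refine (hint c' hc').ae_eq_of_forall_setIntegral_eq _ _
    ((hint c hc).add (integrable_const _)) fun s hs _ => ?_
  have hswitch : (fun x => F (s.piecewise (fun _ => c') (fun _ => c) x) x)
      = s.piecewise (F c') (F c) := by
    funext x
    by_cases hx : x ∈ s <;> simp [hx]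
  have hpw := hF (s.piecewise (fun _ => c') (fun _ => c))
    (Integrable.piecewise hs integrableOn_const integrableOn_const)
  rw [hswitch, integral_piecewise hs (hint c' hc').integrableOn (hint c hc).integrableOn,
    integral_piecewise hs integrableOn_const integrableOn_const] at hpw
  have hsplit := integral_add_compl hs (hint c hc)
  rw [hconst] at hsplit
  rw [setIntegral_const, setIntegral_const, probReal_compl_eq_one_sub hs, smul_eq_mul,
    smul_eq_mul] at hpw
  rw [integral_add (hint c hc).integrableOn integrableOn_const, setIntegral_const, smul_eq_mul]
  linarith

lemma integrable_and_ae_eq_one_of_integral_add_mul {Y : Type*} [MeasurableSpace Y]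
    {ν : Measure Y} [IsProbabilityMeasure ν] {G D : Y → ℝ} (hD : ∀ t, D t ≤ 1) {b c c' : ℝ}
    (hcc' : c ≠ c') (hc : Integrable (fun t => G t + c * D t) ν)
    (hc' : Integrable (fun t => G t + c' * D t) ν) (h : ∫ t, (G t + c * D t) ∂ν = b + c)
    (h' : ∫ t, (G t + c' * D t) ∂ν = b + c') :
    Integrable G ν ∧ D =ᵐ[ν] 1 := by
  have hsub : c' - c ≠ 0 := sub_ne_zero.2 hcc'.symm
  have hDint : Integrable D ν :=
    ((hc'.sub hc).const_mul (c' - c)⁻¹).congr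
      (ae_of_all _ fun t => by simp only [Pi.sub_apply]; field_simp; ring)
  have hGint : Integrable G ν :=
    (hc.sub (hDint.const_mul c)).congr (ae_of_all _ fun t => by simp)
  refine ⟨hGint, ?_⟩
  rw [integral_add hGint (hDint.const_mul _), integral_const_mul] at h h'
  have hDmean : ∫ t, D t ∂ν = 1 := mul_left_cancel₀ hsub (by linear_combination h' - h)
  have hdefect : ∫ t, (1 - D t) ∂ν = 0 := by
    simp [integral_sub (integrable_const 1) hDint, hDmean]
  filter_upwards [(integral_eq_zero_iff_of_nonneg (fun t => sub_nonneg.2 (hD t))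
    ((integrable_const 1).sub hDint)).1 hdefect] with t ht
  exact (sub_eq_zero.1 ht).symm

lemma integrable_and_ae_eq_one_of_forall_integral_add_mul {Y : Type*} [MeasurableSpace Y]
    {ν : Measure Y} [IsProbabilityMeasure ν] {G D : Y → ℝ} (hD : ∀ t, D t ≤ 1) {b : ℝ}
    {s : Finset ℝ} (hs : 3 ≤ s.card) (h : ∀ c ∈ s, ∫ t, (G t + c * D t) ∂ν = b + c) :
    Integrable G ν ∧ D =ᵐ[ν] 1 := by
  classical
  -- a non-integrable `G + c D` has junk integral `0`, forcing `c = -b`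
  have hint (c) (hc : c ∈ s.erase (-b)) : Integrable (fun t => G t + c * D t) ν := by
    by_contra hni
    have hcb := h c (Finset.mem_of_mem_erase hc)
    rw [integral_undef hni] at hcb
    exact Finset.ne_of_mem_erase hc (by linarith)
  obtain ⟨c, hc, c', hc', hcc'⟩ := Finset.one_lt_card.1
    (show 1 < (s.erase (-b)).card by
      have := Finset.pred_card_le_card_erase (a := -b) (s := s); omega)
  exact integrable_and_ae_eq_one_of_integral_add_mul hD hcc' (hint c hc) (hint c' hc')
    (h c (Finset.mem_of_mem_erase hc)) (h c' (Finset.mem_of_mem_erase hc'))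

noncomputable section

variable {X Y A R : Type*} [Fintype A] [MeasurableSpace R]

def fiberMean (w : X → Y → A → ℝ) (κ : X → Y → A → Measure R) (g : X × Y × A × R → ℝ)
    (x : X) (t : Y) : ℝ :=
  ∑ a, w x t a * ∫ r, g (x, t, a, r) ∂κ x t a

open Classical in
def integrableMass (w : X → Y → A → ℝ) (κ : X → Y → A → Measure R) (g : X × Y × A × R → ℝ)
    (x : X) (t : Y) : ℝ :=
  ∑ a, w x t a * if Integrable (fun r => g (x, t, a, r)) (κ x t a) then 1 else 0

def IsIteratedLaw [MeasurableSpace X] [MeasurableSpace Y] [MeasurableSpace A]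
    (P : Measure (X × Y × A × R)) (μx : Measure X) (μt : Measure Y) (w : X → Y → A → ℝ)
    (κ : X → Y → A → Measure R) : Prop :=
  ∀ g, Integrable g P → ∫ z, g z ∂P = ∫ x, ∫ t, fiberMean w κ g x t ∂μt ∂μx

variable {w : X → Y → A → ℝ} {κ : X → Y → A → Measure R}

lemma fiberMean_add_comp_fst [∀ x t a, IsProbabilityMeasure (κ x t a)] (g : X × Y × A × R → ℝ)
    (θ : X → ℝ) (x : X) (t : Y) :
    fiberMean w κ (fun z => g z + θ z.1) x t
      = fiberMean w κ g x t + θ x * integrableMass w κ g x t := by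
  simp only [fiberMean, integrableMass, integral_add_const_eq_ite, Finset.mul_sum,
    ← Finset.sum_add_distrib]
  exact Finset.sum_congr rfl fun a _ => by ring

lemma fiberMean_comp_fst [∀ x t a, IsProbabilityMeasure (κ x t a)] (θ : X → ℝ) {x : X} {t : Y}
    (hw : ∑ a, w x t a = 1) :
    fiberMean w κ (fun z => θ z.1) x t = θ x := by
  simp only [fiberMean, integral_const, probReal_univ, one_smul, ← Finset.sum_mul, hw, one_mul]

lemma integrableMass_le_one {g : X × Y × A × R → ℝ} {x : X} {t : Y}
    (hw₀ : ∀ a, 0 ≤ w x t a) (hw₁ : ∑ a, w x t a = 1) : integrableMass w κ g x t ≤ 1 := by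
  calc integrableMass w κ g x t ≤ ∑ a, w x t a :=
        Finset.sum_le_sum fun a _ => mul_le_of_le_one_right (hw₀ a) (by split_ifs <;> norm_num)
    _ = 1 := hw₁

lemma integrable_of_integrableMass_eq_one {g : X × Y × A × R → ℝ} {x : X} {t : Y} {a : A}
    (hw₀ : ∀ a, 0 ≤ w x t a) (hw₁ : ∑ a, w x t a = 1) (h : integrableMass w κ g x t = 1)
    (ha : w x t a ≠ 0) : Integrable (fun r => g (x, t, a, r)) (κ x t a) := by
  classical
  by_contra hna
  have hdefect : ∑ b, w x t b *
      (1 - if Integrable (fun r => g (x, t, b, r)) (κ x t b) then 1 else 0) = 0 := by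
    simp only [mul_sub, mul_one, Finset.sum_sub_distrib, hw₁]
    rw [← integrableMass, h, sub_self]
  have := (Finset.sum_eq_zero_iff_of_nonneg fun b _ =>
    mul_nonneg (hw₀ b) (by split_ifs <;> norm_num)).1 hdefect a (Finset.mem_univ a)
  simp [hna, ha] at this

variable [MeasurableSpace X] [MeasurableSpace Y] [MeasurableSpace A] {P : Measure (X × Y × A × R)}
  {μx : Measure X} {μt : Measure Y}

lemma IsIteratedLaw.map_fst [IsFiniteMeasure P] [IsFiniteMeasure μx] [IsProbabilityMeasure μt]
    [∀ x t a, IsProbabilityMeasure (κ x t a)] (hP : IsIteratedLaw P μx μt w κ)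
    (hw : ∀ x t, ∑ a, w x t a = 1) : P.map Prod.fst = μx := by
  ext s hs
  have hind := hP _ ((integrable_const (1 : ℝ)).indicator (measurable_fst hs))
  have hfiber (x : X) (t : Y) :
      fiberMean w κ ((Prod.fst ⁻¹' s).indicator fun _ => (1 : ℝ)) x t = s.indicator 1 x :=
    fiberMean_comp_fst (s.indicator 1) (hw x t)
  simp only [hfiber, integral_const, probReal_univ, one_smul] at hind
  rw [integral_indicator_const _ (measurable_fst hs), integral_indicator_one hs, smul_eq_mul,
    mul_one] at hind
  rw [Measure.map_apply measurable_fst hs]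
  exact (ENNReal.toReal_eq_toReal_iff' (measure_ne_top _ _) (measure_ne_top _ _)).1 hind

lemma IsIteratedLaw.integral_add_mul_integrableMass [IsFiniteMeasure P] [IsFiniteMeasure μx]
    [IsProbabilityMeasure μt] [∀ x t a, IsProbabilityMeasure (κ x t a)]
    (hP : IsIteratedLaw P μx μt w κ) (hw : ∀ x t, ∑ a, w x t a = 1)
    {g : X × Y × A × R → ℝ} (hg : Integrable g P) {θ : X → ℝ} (hθ : Integrable θ μx) :
    ∫ x, ∫ t, (fiberMean w κ g x t + θ x * integrableMass w κ g x t) ∂μt ∂μx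
      = ∫ z, g z ∂P + ∫ x, θ x ∂μx := by
  have hmap := hP.map_fst hw
  have hθP : Integrable (fun z => θ z.1) P :=
    (integrable_map_measure (hmap ▸ hθ.aestronglyMeasurable) measurable_fst.aemeasurable).1
      (hmap ▸ hθ)
  have hθmean : ∫ z, θ z.1 ∂P = ∫ x, θ x ∂μx := by
    rw [← hmap, integral_map measurable_fst.aemeasurable (hmap ▸ hθ.aestronglyMeasurable)]
  simp only [← fiberMean_add_comp_fst]
  rw [← hθmean, ← integral_add hg hθP]
  exact (hP _ (hg.add hθP)).symm

theorem IsIteratedLaw.ae_integrable_fiberMean [IsFiniteMeasure P] [IsProbabilityMeasure μx]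
    [IsProbabilityMeasure μt] [∀ x t a, IsProbabilityMeasure (κ x t a)]
    (hP : IsIteratedLaw P μx μt w κ) (hw₀ : ∀ x t a, 0 ≤ w x t a)
    (hw₁ : ∀ x t, ∑ a, w x t a = 1) {g : X × Y × A × R → ℝ} (hg : Integrable g P) :
    ∀ᵐ x ∂μx, Integrable (fiberMean w κ g x) μt ∧ ∀ᵐ t ∂μt, integrableMass w κ g x t = 1 := by
  classical
  set K := ∫ z, g z ∂P
  let F (c : ℝ) (x : X) : ℝ := ∫ t, (fiberMean w κ g x t + c * integrableMass w κ g x t) ∂μt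
  have hF (θ : X → ℝ) (hθ : Integrable θ μx) : ∫ x, F (θ x) x ∂μx = K + ∫ x, θ x ∂μx :=
    hP.integral_add_mul_integrableMass hw₁ hg hθ
  let s : Finset ℝ := {1 - K, 2 - K, 3 - K}
  have hs : s.card = 3 :=
    Finset.card_eq_three.2 ⟨_, _, _, by norm_num, by norm_num, by norm_num, rfl⟩
  have hpin : ∀ᵐ x ∂μx, ∀ c ∈ s, F c x = F (1 - K) x + (c - (1 - K)) := by
    refine (Filter.eventually_all_finset s).2 fun c hc => ae_eq_add_of_integral_comp_eq hF
      (by norm_num) ?_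
    simp only [s, Finset.mem_insert, Finset.mem_singleton] at hc
    rcases hc with rfl | rfl | rfl <;> norm_num
  filter_upwards [hpin] with x hx
  exact integrable_and_ae_eq_one_of_forall_integral_add_mul (b := F (1 - K) x - (1 - K))
    (fun t => integrableMass_le_one (hw₀ x t) (hw₁ x t)) hs.ge fun c hc =>
      (hx c hc).trans (by ring)

end

lemma fiberMean_eq_sum_of_affine {X Y A : Type*} [Fintype A] {w : X → Y → A → ℝ}
    {κ : X → Y → A → Measure ℝ} [∀ x t a, IsProbabilityMeasure (κ x t a)]
    {g : X × Y × A × ℝ → ℝ} {x : X} {t : Y} {α γ : A → ℝ}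
    (hg : ∀ a r, g (x, t, a, r) = α a * r + γ a)
    (hint : ∀ a, Integrable (fun r => g (x, t, a, r)) (κ x t a)) :
    fiberMean w κ g x t = ∑ a, w x t a * (α a * ∫ r, r ∂κ x t a + γ a) := by
  refine Finset.sum_congr rfl fun a _ => ?_
  simp only [hg] at hint ⊢
  rw [integral_mul_add_of_integrable (hint a)]

lemma opfv_fiberMean_eq {𝒳 𝒜 C : Type*} [Fintype 𝒜] [DecidableEq C]
    {π0 q fhat : 𝒳 → ℝ → 𝒜 → ℝ} {κ : 𝒳 → ℝ → 𝒜 → Measure ℝ}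
    [∀ x t a, IsProbabilityMeasure (κ x t a)] (hq : ∀ x t a, ∫ r, r ∂(κ x t a) = q x t a)
    {φ : ℝ → C} {t' pφ : ℝ} {π s : 𝒳 → 𝒜 → ℝ} {est : 𝒳 × ℝ × 𝒜 × ℝ → ℝ}
    (hest : ∀ x t a r, est (x, t, a, r) =
      (if φ t = φ t' then (1 : ℝ) else 0) / pφ * (π x a / π0 x t a) * (r - fhat x t a) * s x a
        + ∑ a', π x a' * fhat x t' a' * s x a')
    {x : 𝒳} {t : ℝ} (hπ0 : ∀ a, π0 x t a ≠ 0) (hπ0sum : ∑ a, π0 x t a = 1)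
    (hCPC : φ t = φ t' → ∀ a, q x t a - fhat x t a = q x t' a - fhat x t' a)
    (hint : ∀ a, Integrable (fun r => est (x, t, a, r)) (κ x t a)) :
    fiberMean π0 κ est x t = ∑ a, π x a * fhat x t' a * s x a
      + {u | φ u = φ t'}.indicator
          (fun _ => (∑ a, π x a * ((q x t' a - fhat x t' a) * s x a)) / pφ) t := by
  set B := ∑ a, π x a * fhat x t' a * s x a
  set δ : ℝ := if φ t = φ t' then 1 else 0
  rw [fiberMean_eq_sum_of_affine (α := fun a => δ / pφ * (π x a / π0 x t a) * s x a)
    (γ := fun a => B - δ / pφ * (π x a / π0 x t a) * s x a * fhat x t a)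
    (fun a r => by rw [hest]; ring) hint]
  have hterm (a : 𝒜) : π0 x t a * (δ / pφ * (π x a / π0 x t a) * s x a * q x t a
      + (B - δ / pφ * (π x a / π0 x t a) * s x a * fhat x t a))
      = δ / pφ * (π x a * ((q x t a - fhat x t a) * s x a)) + π0 x t a * B := by
    field_simp [hπ0 a]
    ring
  simp only [hq, hterm, Finset.sum_add_distrib, ← Finset.mul_sum, ← Finset.sum_mul, hπ0sum,
    one_mul]
  by_cases hφ : φ t = φ t'
  · rw [Set.indicator_of_mem (show t ∈ {u | φ u = φ t'} from hφ)]
    simp only [δ, if_pos hφ, hCPC hφ]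
    ring
  · rw [Set.indicator_of_notMem (show t ∉ {u | φ u = φ t'} from hφ)]
    simp [δ, hφ]

theorem opfv_pg_unbiased_general
    {𝒳 : Type*} [MeasurableSpace 𝒳] {𝒜 : Type*} [Fintype 𝒜] [MeasurableSpace 𝒜]
    {C : Type*} [DecidableEq C]
    -- time horizon of the logged data
    (T : ℝ)
    -- stationary context distribution p(x) and time distribution p(t), supported on [0,T]
    (μx : Measure 𝒳) [IsProbabilityMeasure μx]
    (μt : Measure ℝ) [IsProbabilityMeasure μt]
    (hμtsupp : μt (Set.Icc 0 T) = 1)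
    -- logging policy, expected reward, regression model
    (π0 q fhat : 𝒳 → ℝ → 𝒜 → ℝ)
    (hπ0nonneg : ∀ x t a, 0 ≤ π0 x t a) (hπ0sum : ∀ x t, ∑ a, π0 x t a = 1)
    -- reward distributions with conditional mean q
    (κ : 𝒳 → ℝ → 𝒜 → Measure ℝ) (hκ : ∀ x t a, IsProbabilityMeasure (κ x t a))
    (hq : ∀ x t a, ∫ r, r ∂(κ x t a) = q x t a)
    -- time feature function and target time
    (φ : ℝ → C) (t' : ℝ)
    -- marginal probability of the target time feature, p(φ(t'))
    (pφ : ℝ) (hpφdef : pφ = (μt ({s | φ s = φ t'} ∩ Set.Icc 0 T)).toReal)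
    -- Common Time Feature Support
    (hpφpos : 0 < pφ)
    -- Full Support of the logging policy
    (hfull : ∀ x a, ∀ t ∈ Set.Icc 0 T, 0 < π0 x t a)
    -- Conditional Pairwise Correctness
    (hCPC : ∀ x a, ∀ t ∈ Set.Icc 0 T, φ t = φ t' →
      q x t a - q x t' a = fhat x t a - fhat x t' a)
    -- parameterized policy π_ζ(a|x,t') at the target time, parameter ζ ∈ ℝ^d, coordinate j
    (d : ℕ) (πz : (Fin d → ℝ) → 𝒳 → 𝒜 → ℝ) (ζ : Fin d → ℝ)
    -- s is the j-th component of the policy score s_ζ(x,t',a) = ∇_ζ log π_ζ(a|x,t')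
    (s : 𝒳 → 𝒜 → ℝ)
    -- logged data: n i.i.d. draws from P, the joint law of (x, t, a, r)
    (n : ℕ) (hn : 0 < n)
    (P : Measure (𝒳 × ℝ × 𝒜 × ℝ)) [IsProbabilityMeasure P]
    (hP : ∀ g : 𝒳 × ℝ × 𝒜 × ℝ → ℝ, Integrable g P →
      ∫ z, g z ∂P
        = ∫ x, (∫ t, (∑ a, π0 x t a * (∫ r, g (x, t, a, r) ∂(κ x t a))) ∂μt) ∂μx)
    -- per-sample term of the j-th coordinate of the OPFV policy-gradient estimator
    (est : 𝒳 × ℝ × 𝒜 × ℝ → ℝ)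
    (hest : ∀ x t a r, est (x, t, a, r) =
      (if φ t = φ t' then (1 : ℝ) else 0) / pφ * (πz ζ x a / π0 x t a)
          * (r - fhat x t a) * s x a
        + ∑ a', πz ζ x a' * fhat x t' a' * s x a')
    -- integrability (all expectations are assumed well-defined)
    (hInt : Integrable est P) :
    -- E_𝒟[∇_ζ V̂^OPFV] = ∇_ζ V_{t'}(π_ζ) = E_{p(x|t') π_ζ(a|x,t')}[q(x,t',a) s_ζ(x,t',a)]
    (∫ D : Fin n → 𝒳 × ℝ × 𝒜 × ℝ, (n : ℝ)⁻¹ * ∑ i, est (D i)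
        ∂(Measure.pi fun _ => P))
      = ∫ x, ∑ a, πz ζ x a * (q x t' a * s x a) ∂μx := by
  have : Nonempty (Fin n) := ⟨⟨0, hn⟩⟩
  have hIcc_compl : μt (Set.Icc 0 T)ᶜ = 0 := (prob_compl_eq_zero_iff measurableSet_Icc).2 hμtsupp
  have hS : μt.real {u | φ u = φ t'} = pφ := by
    rw [hpφdef, measure_inter_conull hIcc_compl, Measure.real]
  have hmean := integral_sampleMean_pi (ι := Fin n) hInt
  rw [Fintype.card_fin] at hmean
  rw [hmean, hP est hInt]
  refine integral_congr_ae ?_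
  filter_upwards [IsIteratedLaw.ae_integrable_fiberMean hP hπ0nonneg hπ0sum hInt]
    with x ⟨hxint, hxmass⟩
  set B := ∑ a, πz ζ x a * fhat x t' a * s x a
  set W := ∑ a, πz ζ x a * ((q x t' a - fhat x t' a) * s x a)
  set S := {u | φ u = φ t'}
  have hfiber : fiberMean π0 κ est x =ᵐ[μt] fun t => B + S.indicator (fun _ => W / pφ) t := by
    filter_upwards [hxmass, mem_ae_iff.2 hIcc_compl] with t hmass ht
    exact opfv_fiberMean_eq hq hest (fun a => (hfull x a t ht).ne') (hπ0sum x t)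
      (fun hφ a => by linarith [hCPC x a t ht hφ]) fun a =>
        integrable_of_integrableMass_eq_one (hπ0nonneg x t) (hπ0sum x t) hmass
          (hfull x a t ht).ne'
  have hind : Integrable (S.indicator fun _ => W / pφ) μt :=
    ((hxint.congr hfiber).sub (integrable_const B)).congr (ae_of_all _ fun t => by simp)
  calc ∫ t, fiberMean π0 κ est x t ∂μt = ∫ t, (B + S.indicator (fun _ => W / pφ) t) ∂μt :=
        integral_congr_ae hfiber
    _ = B + W := by
        rw [integral_add (integrable_const B) hind, integral_indicator_const_of_integrable hind, hS,
          integral_const, probReal_univ, one_smul, mul_div_cancel₀ _ hpφpos.ne']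
    _ = ∑ a, πz ζ x a * (q x t' a * s x a) := by
        rw [← Finset.sum_add_distrib]
        exact Finset.sum_congr rfl fun a _ => by ring

/-- **Unbiasedness of the gradient of the OPFV estimator (Proposition D.2).**
Under Full Support, Common Time Feature Support, Conditional Pairwise Correctness and a
stationary context distribution, for each coordinate `j` of the policy parameter `ζ`
(with `s` the `j`-th component of the policy score
`s_ζ(x,t',a) = ∇_ζ log π_ζ(a|x,t')`),
`E_𝒟[∇_ζ V̂^OPFV_{t'}(π_ζ;𝒟)] = E_{p(x|t') π_ζ(a|x,t')}[q(x,t',a) s_ζ(x,t',a)]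
 = ∇_ζ V_{t'}(π_ζ)`. -/
theorem opfv_pg_unbiased
    {𝒳 : Type*} [MeasurableSpace 𝒳] {𝒜 : Type*} [Fintype 𝒜] [MeasurableSpace 𝒜]
    {C : Type*} [DecidableEq C]
    -- time horizon of the logged data
    (T : ℝ) (hT : 0 < T)
    -- stationary context distribution p(x) and time distribution p(t), supported on [0,T]
    (μx : Measure 𝒳) [IsProbabilityMeasure μx]
    (μt : Measure ℝ) [IsProbabilityMeasure μt]
    (hμtsupp : μt (Set.Icc 0 T) = 1)
    -- logging policy, expected reward, regression model
    (π0 q fhat : 𝒳 → ℝ → 𝒜 → ℝ)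
    (hπ0nonneg : ∀ x t a, 0 ≤ π0 x t a) (hπ0sum : ∀ x t, ∑ a, π0 x t a = 1)
    -- reward distributions with conditional mean q
    (κ : 𝒳 → ℝ → 𝒜 → Measure ℝ) (hκ : ∀ x t a, IsProbabilityMeasure (κ x t a))
    (hq : ∀ x t a, ∫ r, r ∂(κ x t a) = q x t a)
    -- time feature function and target time
    (φ : ℝ → C) (t' : ℝ) (ht' : T < t')
    -- marginal probability of the target time feature, p(φ(t'))
    (pφ : ℝ) (hpφdef : pφ = (μt ({s | φ s = φ t'} ∩ Set.Icc 0 T)).toReal)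
    -- Common Time Feature Support
    (hpφpos : 0 < pφ)
    -- Full Support of the logging policy
    (hfull : ∀ x a, ∀ t ∈ Set.Icc 0 T, 0 < π0 x t a)
    -- Conditional Pairwise Correctness
    (hCPC : ∀ x a, ∀ t ∈ Set.Icc 0 T, φ t = φ t' →
      q x t a - q x t' a = fhat x t a - fhat x t' a)
    -- parameterized policy π_ζ(a|x,t') at the target time, parameter ζ ∈ ℝ^d, coordinate j
    (d : ℕ) (πz : (Fin d → ℝ) → 𝒳 → 𝒜 → ℝ) (ζ : Fin d → ℝ) (j : Fin d)
    (hπzpos : ∀ v x a, 0 < πz v x a) (hπzsum : ∀ v x, ∑ a, πz v x a = 1)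
    (hπzdiff : ∀ x a,
      DifferentiableAt ℝ (fun u => πz (Function.update ζ j u) x a) (ζ j))
    -- s is the j-th component of the policy score s_ζ(x,t',a) = ∇_ζ log π_ζ(a|x,t')
    (s : 𝒳 → 𝒜 → ℝ)
    (hs : ∀ x a,
      s x a = deriv (fun u => Real.log (πz (Function.update ζ j u) x a)) (ζ j))
    -- logged data: n i.i.d. draws from P, the joint law of (x, t, a, r)
    (n : ℕ) (hn : 0 < n)
    (P : Measure (𝒳 × ℝ × 𝒜 × ℝ)) [IsProbabilityMeasure P]
    (hP : ∀ g : 𝒳 × ℝ × 𝒜 × ℝ → ℝ, Integrable g P →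
      ∫ z, g z ∂P
        = ∫ x, (∫ t, (∑ a, π0 x t a * (∫ r, g (x, t, a, r) ∂(κ x t a))) ∂μt) ∂μx)
    -- per-sample term of the j-th coordinate of the OPFV policy-gradient estimator
    (est : 𝒳 × ℝ × 𝒜 × ℝ → ℝ)
    (hest : ∀ x t a r, est (x, t, a, r) =
      (if φ t = φ t' then (1 : ℝ) else 0) / pφ * (πz ζ x a / π0 x t a)
          * (r - fhat x t a) * s x a
        + ∑ a', πz ζ x a' * fhat x t' a' * s x a')
    -- integrability (all expectations are assumed well-defined)
    (hInt : Integrable est P)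
    (hGInt : Integrable (fun x => ∑ a, πz ζ x a * (q x t' a * s x a)) μx) :
    -- E_𝒟[∇_ζ V̂^OPFV] = ∇_ζ V_{t'}(π_ζ) = E_{p(x|t') π_ζ(a|x,t')}[q(x,t',a) s_ζ(x,t',a)]
    (∫ D : Fin n → 𝒳 × ℝ × 𝒜 × ℝ, (n : ℝ)⁻¹ * ∑ i, est (D i)
        ∂(Measure.pi fun _ => P))
      = ∫ x, ∑ a, πz ζ x a * (q x t' a * s x a) ∂μx :=
  opfv_pg_unbiased_general T μx μt hμtsupp π0 q fhat hπ0nonneg hπ0sum κ hκ hq φ t' pφ hpφdef hpφpos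
    hfull hCPC d πz ζ s n hn P hP est hest hInt
end
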